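/- arXiv:1904.07682 — 7 statements merged into one kernel-verified Lean document; each statement's English description precedes it below -/
import Mathlib

section
/- Let G be an abelian group with k̃ elements and let 0<p<1 be such that min(p,1−p) ≥ 10^3·(log k̃)^{1/2}·k̃^{−1/5}. If Λ ⊆ G∖{0} is chosen by the random procedure, then with probability 1−o(1) (as k̃ → ∞, uniformly over all admissible p) the set Λ is a generating set of the group G. -/
/-!
If `Λ` does not generate `G`, it lies in a proper subgroup `H`. At least `k̃/2` elements, hence at
least `k̃/4` negation pairs, lie outside `H`, so `Λ ⊆ H` with probability at most
`(1 - p)^(k̃/4) ≤ exp(-p k̃/4) ≤ exp(-250 k̃^{4/5})`. Every subgroup is generated by at most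
`⌈log₂ k̃⌉` elements, so there are at most `k̃^⌈log₂ k̃⌉ = exp(O(log² k̃))` subgroups, and the union
bound over proper subgroups leaves a failure probability of at most `exp(-k̃^{4/5})`.
-/

universe u v

open Filter

/-- The Cayley graph of an additive abelian group `G` with connection set `Λ`:
distinct vertices `x y : G` are adjacent iff `x - y ∈ Λ` (for `Λ` with `Λ = -Λ`). -/
def cayleyGraph (G : Type u) [AddCommGroup G] (Λ : Set G) : SimpleGraph G where
  Adj x y := x ≠ y ∧ x - y ∈ Λ ∧ y - x ∈ Λ
  symm := by
    constructor
    rintro x y ⟨h1, h2, h3⟩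
    exact ⟨fun e => h1 e.symm, h3, h2⟩
  loopless := by
    constructor
    rintro x ⟨h1, -, -⟩
    exact h1 rfl

/-- `Λ` is a possible outcome of the random procedure: `0 ∉ Λ` and `Λ = -Λ`. -/
def IsSymmetricSubset {G : Type u} [AddCommGroup G] (Λ : Finset G) : Prop :=
  (0 : G) ∉ Λ ∧ ∀ g ∈ Λ, -g ∈ Λ

/-- The number of negation-pairs `{g, -g}` among the elements of `Λ`. -/
noncomputable def pairCount {G : Type u} [AddCommGroup G] (Λ : Finset G) : ℕ :=
  letI := Classical.decEq G
  (Λ.image fun g => ({g, -g} : Finset G)).card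

/-- The probability that the random procedure with parameter `p` (each pair
`{g, -g} ⊆ G \ {0}` is included independently with probability `p`) produces
exactly the symmetric set `Λ`. -/
noncomputable def lambdaWeight {G : Type u} [AddCommGroup G] [Fintype G] (p : ℝ)
    (Λ : Finset G) : ℝ :=
  letI := Classical.decEq G
  p ^ pairCount Λ * (1 - p) ^ (pairCount ((Finset.univ : Finset G).erase 0) - pairCount Λ)

open Classical in
/-- The probability that the random set `Λ ⊆ G \ {0}` produced by the random procedure
with parameter `p` satisfies the predicate `P`. -/
noncomputable def lambdaProb (G : Type u) [AddCommGroup G] [Fintype G] (p : ℝ)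
    (P : Finset G → Prop) : ℝ :=
  ∑ Λ : Finset G, if IsSymmetricSubset Λ ∧ P Λ then lambdaWeight p Λ else 0

/-- `emb(H, Γ)`: the number of graph embeddings of `H` into `Γ`. -/
noncomputable def embCount {α : Type u} {β : Type v} (H : SimpleGraph α)
    (Γ : SimpleGraph β) : ℕ :=
  Nat.card (H ↪g Γ)

/-- `emb(H, n)`: the maximum of `emb(H, Γ)` over all `n`-vertex graphs `Γ`. -/
noncomputable def embMax {α : Type u} (H : SimpleGraph α) (n : ℕ) : ℕ :=
  sSup {m | ∃ Γ : SimpleGraph (Fin n), embCount H Γ = m}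

/-- The number of vertex subsets of `Γ` inducing a copy of `H`. -/
noncomputable def indCount {α : Type u} {β : Type v} (H : SimpleGraph α)
    (Γ : SimpleGraph β) : ℕ :=
  Nat.card {s : Set β // Nonempty ((Γ.induce s) ≃g H)}

/-- `ind(H, n)`: the maximum number of induced copies of `H` in an `n`-vertex graph. -/
noncomputable def indMax {α : Type u} (H : SimpleGraph α) (n : ℕ) : ℕ :=
  sSup {m | ∃ Γ : SimpleGraph (Fin n), indCount H Γ = m}

/-- `Γ` is a blow-up of `H` with (non-empty) parts `W i`, `i ∈ V(H)`. -/
def IsBlowupWith {α : Type u} {β : Type v} (H : SimpleGraph α) (Γ : SimpleGraph β)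
    (W : α → Set β) : Prop :=
  (∀ i, (W i).Nonempty) ∧ (∀ x : β, ∃! i, x ∈ W i) ∧
    ∀ i j, i ≠ j → ∀ x ∈ W i, ∀ y ∈ W j, (Γ.Adj x y ↔ H.Adj i j)

/-- Auxiliary fuelled version of "balanced iterated blow-up". -/
def IsBIBAux {α : Type u} (H : SimpleGraph α) : ℕ → ∀ (β : Type v), SimpleGraph β → Prop
  | 0, β, _ => Nat.card β < Nat.card α
  | n + 1, β, Γ =>
      Nat.card β < Nat.card α ∨
        ∃ W : α → Set β, IsBlowupWith H Γ W ∧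
          (∀ i j, Nat.card (W i) ≤ Nat.card (W j) + 1) ∧
          ∀ i, IsBIBAux H n ↥(W i) (Γ.induce (W i))

/-- `Γ` is a balanced iterated blow-up of `H`: either `|V(Γ)| < |V(H)|`, or `Γ` is a
balanced blow-up of `H` each of whose parts induces a balanced iterated blow-up of `H`. -/
def IsBalancedIterBlowup {α : Type u} {β : Type v} (H : SimpleGraph α)
    (Γ : SimpleGraph β) : Prop :=
  IsBIBAux H (Nat.card β + 1) β Γ

/-- `φ` is one of the `2k̃` rotations and reflections of a Cayley graph on `G`. -/
def IsRotOrRefl {G : Type u} [AddCommGroup G] (φ : G → G) : Prop :=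
  (∃ g : G, ∀ x : G, φ x = x + g) ∨ ∃ g : G, ∀ x : G, φ x = -x + g

/-- A graph is prime if no subset `U` with `2 ≤ |U| < |V(H)|` is such that every vertex
outside `U` is complete to `U` or has no edges to `U`. -/
def IsPrimeGraph {α : Type u} (H : SimpleGraph α) : Prop :=
  ¬ ∃ U : Set α, 2 ≤ Nat.card U ∧ Nat.card U < Nat.card α ∧
      ∀ x ∉ U, (∀ y ∈ U, H.Adj x y) ∨ ∀ y ∈ U, ¬ H.Adj x y

/-- A signature of `H`: distinct vertices outside `S` have distinct neighbourhoods in `S`. -/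
def IsSignature {α : Type u} (H : SimpleGraph α) (S : Set α) : Prop :=
  ∀ v ∉ S, ∀ w ∉ S, v ≠ w → H.neighborSet v ∩ S ≠ H.neighborSet w ∩ S

/-- An `r`-super-signature of `H`. -/
def IsSuperSignature {α : Type u} (H : SimpleGraph α) (r : ℝ) (S : Set α) : Prop :=
  S.Nonempty ∧ ∀ v ∉ S, ∀ w ∉ S, v ≠ w →
    r * (Nat.card S : ℝ) ≤
      (Nat.card ↥(symmDiff (H.neighborSet v) (H.neighborSet w) ∩ S) : ℝ)

/-- The Cayley graph `cayleyGraph G Λ` is `(q₀, δ₀)`-typical. -/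
def IsTypical {G : Type u} [AddCommGroup G] [Fintype G] (Λ : Set G) (q₀ δ₀ : ℝ) : Prop :=
  (∀ v : G,
      q₀ * (Fintype.card G : ℝ) ≤ (Nat.card ((cayleyGraph G Λ).neighborSet v) : ℝ) ∧
        (Nat.card ((cayleyGraph G Λ).neighborSet v) : ℝ) ≤
          (1 - q₀) * (Fintype.card G : ℝ)) ∧
    (∀ v w : G, v ≠ w →
      q₀ * (Fintype.card G : ℝ) ≤
        (Nat.card {u : G | u ≠ v ∧ u ≠ w ∧
          Xor' ((cayleyGraph G Λ).Adj u v) ((cayleyGraph G Λ).Adj u w)} : ℝ)) ∧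
    (¬ ∃ X Y : Set G, Disjoint X Y ∧
      2 * (Fintype.card G : ℝ) ^ ((4 : ℝ) / 5) ≤ (Nat.card X : ℝ) ∧
      2 * (Fintype.card G : ℝ) ^ ((4 : ℝ) / 5) ≤ (Nat.card Y : ℝ) ∧
      ((∀ x ∈ X, ∀ y ∈ Y, (cayleyGraph G Λ).Adj x y) ∨
        ∀ x ∈ X, ∀ y ∈ Y, ¬ (cayleyGraph G Λ).Adj x y)) ∧
    ∀ (X : Set G) (f : G → G),
      (1 - δ₀) * (Fintype.card G : ℝ) ≤ (Nat.card X : ℝ) →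
      Set.InjOn f X →
      (∀ v ∈ X, ∀ w ∈ X, v ≠ w →
        ((cayleyGraph G Λ).Adj (f v) (f w) ↔ (cayleyGraph G Λ).Adj v w)) →
      ∃ φ : G → G, IsRotOrRefl φ ∧ Set.EqOn f φ X

/-- The induced subgraph of the Cayley graph `cayleyGraph G Λ` on the vertex set `K`
is a `(q, δ)`-reasonable induced subgraph. -/
def IsReasonable {G : Type u} [AddCommGroup G] [Fintype G] (Λ K : Set G) (q δ : ℝ) : Prop :=
  IsPrimeGraph ((cayleyGraph G Λ).induce K) ∧
    (∀ v w : G, v ≠ w →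
      q * (Nat.card K : ℝ) ≤
        (Nat.card {u : G | u ∈ K ∧ u ≠ v ∧ u ≠ w ∧
          Xor' ((cayleyGraph G Λ).Adj u v) ((cayleyGraph G Λ).Adj u w)} : ℝ)) ∧
    ∀ (X : Set G) (f : G → G),
      (1 - δ) * (Nat.card K : ℝ) ≤ (Nat.card X : ℝ) →
      Set.InjOn f X →
      (∀ v ∈ X, ∀ w ∈ X, v ≠ w →
        ((cayleyGraph G Λ).Adj (f v) (f w) ↔ (cayleyGraph G Λ).Adj v w)) →
      ∃ φ : G → G, IsRotOrRefl φ ∧ Set.EqOn f φ X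

/-- `E_ℓ(m) = m₁ ⋯ m_ℓ` where `⌈m/ℓ⌉ ≥ m₁ ≥ … ≥ m_ℓ ≥ ⌊m/ℓ⌋` and `m₁ + … + m_ℓ = m`. -/
def Epart (ℓ m : ℕ) : ℕ := (m / ℓ + 1) ^ (m % ℓ) * (m / ℓ) ^ (ℓ - m % ℓ)

/-- The rotation `y ↦ y + g` of a Cayley graph on `G`. -/
def rotationMap {G : Type u} [AddCommGroup G] (g : G) : G → G := fun y => y + g

/-- The reflection `y ↦ -y + g` of a Cayley graph on `G`. -/
def reflectionMap {G : Type u} [AddCommGroup G] (g : G) : G → G := fun y => -y + g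

/-- The family of the `2k̃` rotations and reflections, indexed by `Bool × G`. -/
def rotRefl {G : Type u} [AddCommGroup G] : Bool × G → G → G
  | (false, g) => rotationMap g
  | (true, g) => reflectionMap g

open Finset

section NegPair

variable {G : Type*} [AddCommGroup G] [DecidableEq G]

def negPair (g : G) : Finset G := {g, -g}

lemma mem_negPair {a g : G} : a ∈ negPair g ↔ a = g ∨ a = -g := by
  simp [negPair]

lemma self_mem_negPair (g : G) : g ∈ negPair g := mem_negPair.2 (Or.inl rfl)

lemma negPair_eq_of_mem {a g : G} (h : a ∈ negPair g) : negPair a = negPair g := by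
  rcases mem_negPair.1 h with rfl | rfl
  · rfl
  · simp [negPair, Finset.pair_comm]

lemma card_negPair_le (g : G) : (negPair g).card ≤ 2 := card_le_two

lemma pairCount_eq_card_image (Λ : Finset G) : pairCount Λ = (Λ.image negPair).card := by
  unfold pairCount negPair
  convert rfl

lemma biUnion_image_negPair {Λ : Finset G} (hΛ : ∀ g ∈ Λ, -g ∈ Λ) :
    (Λ.image negPair).biUnion id = Λ := by
  ext x
  simp only [mem_biUnion, mem_image, id, exists_exists_and_eq_and]
  refine ⟨fun ⟨g, hg, hx⟩ => ?_, fun hx => ⟨x, hx, self_mem_negPair x⟩⟩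
  rcases mem_negPair.1 hx with rfl | rfl
  exacts [hg, hΛ g hg]

lemma mem_of_mem_biUnion_negPair {A : Finset (Finset G)} {T : Finset G}
    (hT : ∀ g ∈ T, -g ∈ T) (hA : A ⊆ T.image negPair) {x : G} (hx : x ∈ A.biUnion id) :
    x ∈ T := by
  obtain ⟨P, hP, hxP⟩ := mem_biUnion.1 hx
  obtain ⟨g, hg, rfl⟩ := mem_image.1 (hA hP)
  rcases mem_negPair.1 hxP with rfl | rfl
  exacts [hg, hT g hg]

lemma image_negPair_biUnion {A : Finset (Finset G)} {T : Finset G}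
    (hA : A ⊆ T.image negPair) : (A.biUnion id).image negPair = A := by
  ext P
  simp only [mem_image, mem_biUnion, id]
  constructor
  · rintro ⟨x, ⟨Q, hQ, hxQ⟩, rfl⟩
    obtain ⟨g, -, rfl⟩ := mem_image.1 (hA hQ)
    rwa [negPair_eq_of_mem hxQ]
  · intro hP
    obtain ⟨g, -, rfl⟩ := mem_image.1 (hA hP)
    exact ⟨g, ⟨negPair g, hP, self_mem_negPair g⟩, rfl⟩

lemma neg_mem_biUnion_negPair {A : Finset (Finset G)} {T : Finset G}
    (hA : A ⊆ T.image negPair) {x : G} (hx : x ∈ A.biUnion id) : -x ∈ A.biUnion id := by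
  obtain ⟨P, hP, hxP⟩ := mem_biUnion.1 hx
  obtain ⟨g, -, rfl⟩ := mem_image.1 (hA hP)
  refine mem_biUnion.2 ⟨negPair g, hP, mem_negPair.2 ?_⟩
  rcases mem_negPair.1 hxP with rfl | rfl
  exacts [Or.inr rfl, Or.inl (neg_neg g)]

/-- `Λ ↦ Λ.image negPair` is a bijection from the symmetric sets `Λ ⊆ T` avoiding `0` onto the
sets of negation pairs inside `T`. -/
lemma sum_pairCount_eq_sum_powerset {β : Type*} [AddCommMonoid β] (F : ℕ → β)
    {T : Finset G} (hT0 : (0 : G) ∉ T) (hT : ∀ g ∈ T, -g ∈ T) {S : Finset (Finset G)}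
    (hS : ∀ Λ, Λ ∈ S ↔ IsSymmetricSubset Λ ∧ Λ ⊆ T) :
    ∑ Λ ∈ S, F (pairCount Λ) = ∑ A ∈ (T.image negPair).powerset, F A.card := by
  refine sum_nbij' (fun Λ => Λ.image negPair) (fun A => A.biUnion id) ?_ ?_ ?_ ?_ ?_
  · intro Λ hΛ
    exact mem_powerset.2 (image_subset_image ((hS Λ).1 hΛ).2)
  · intro A hA
    have hA := mem_powerset.1 hA
    have hsub : A.biUnion id ⊆ T := fun x hx => mem_of_mem_biUnion_negPair hT hA hx
    exact (hS _).2 ⟨⟨fun h0 => hT0 (hsub h0), fun x hx => neg_mem_biUnion_negPair hA hx⟩, hsub⟩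
  · intro Λ hΛ
    exact biUnion_image_negPair ((hS Λ).1 hΛ).1.2
  · intro A hA
    exact image_negPair_biUnion (mem_powerset.1 hA)
  · intro Λ _
    rw [pairCount_eq_card_image]

end NegPair

lemma Finset.sum_powerset_pow_mul_one_sub_pow {α R : Type*} [CommRing R] (s : Finset α) (p : R)
    {M : ℕ} (hs : s.card ≤ M) :
    ∑ A ∈ s.powerset, p ^ A.card * (1 - p) ^ (M - A.card) = (1 - p) ^ (M - s.card) := by
  calc ∑ A ∈ s.powerset, p ^ A.card * (1 - p) ^ (M - A.card)
      = ∑ A ∈ s.powerset, p ^ A.card * (1 - p) ^ (s.card - A.card) * (1 - p) ^ (M - s.card) := by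
        refine sum_congr rfl fun A hA => ?_
        have := card_le_card (mem_powerset.1 hA)
        rw [mul_assoc, ← pow_add]
        congr 2
        omega
    _ = (1 - p) ^ (M - s.card) := by
        rw [← sum_mul, sum_pow_mul_eq_add_pow, add_sub_cancel, one_pow, one_mul]

section Sampling

variable {G : Type*} [AddCommGroup G] [Fintype G] {p : ℝ}

lemma lambdaWeight_nonneg (hp0 : 0 ≤ p) (hp1 : p ≤ 1) (Λ : Finset G) :
    0 ≤ lambdaWeight p Λ :=
  mul_nonneg (pow_nonneg hp0 _) (pow_nonneg (sub_nonneg.2 hp1) _)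

open Classical in
lemma lambdaProb_eq_sum_filter (p : ℝ) (P : Finset G → Prop) :
    lambdaProb G p P =
      ∑ Λ ∈ univ.filter (fun Λ => IsSymmetricSubset Λ ∧ P Λ), lambdaWeight p Λ :=
  (sum_filter _ _).symm

theorem lambdaProb_le_sum {ι : Type*} (hp0 : 0 ≤ p) (hp1 : p ≤ 1) {P : Finset G → Prop}
    (s : Finset ι) (Q : ι → Finset G → Prop)
    (hPQ : ∀ Λ, IsSymmetricSubset Λ → P Λ → ∃ i ∈ s, Q i Λ) :
    lambdaProb G p P ≤ ∑ i ∈ s, lambdaProb G p (Q i) := by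
  classical
  have hw := lambdaWeight_nonneg hp0 hp1 (G := G)
  unfold lambdaProb
  rw [sum_comm]
  refine sum_le_sum fun Λ _ => ?_
  split_ifs with hΛ
  · obtain ⟨i, hi, hQ⟩ := hPQ Λ hΛ.1 hΛ.2
    calc lambdaWeight p Λ = if IsSymmetricSubset Λ ∧ Q i Λ then lambdaWeight p Λ else 0 :=
          (if_pos ⟨hΛ.1, hQ⟩).symm
      _ ≤ _ := single_le_sum (f := fun j => if IsSymmetricSubset Λ ∧ Q j Λ then lambdaWeight p Λ
          else 0) (fun j _ => ite_nonneg (hw Λ) le_rfl) hi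
  · exact sum_nonneg fun i _ => ite_nonneg (hw Λ) le_rfl

lemma lambdaWeight_eq [DecidableEq G] (p : ℝ) (Λ : Finset G) :
    lambdaWeight p Λ =
      p ^ pairCount Λ * (1 - p) ^ (pairCount (univ.erase 0 : Finset G) - pairCount Λ) := by
  unfold lambdaWeight
  convert rfl

theorem lambdaProb_subset [DecidableEq G] (p : ℝ) {T : Finset G} (hT0 : (0 : G) ∉ T)
    (hT : ∀ g ∈ T, -g ∈ T) :
    lambdaProb G p (· ⊆ T) = (1 - p) ^ (pairCount (univ.erase 0 : Finset G) - pairCount T) := by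
  have hTM : (T.image negPair).card ≤ pairCount (univ.erase 0 : Finset G) := by
    rw [pairCount_eq_card_image (univ.erase 0)]
    exact card_le_card (image_subset_image fun g hg =>
      mem_erase.2 ⟨ne_of_mem_of_not_mem hg hT0, mem_univ g⟩)
  simp only [lambdaProb_eq_sum_filter, lambdaWeight_eq]
  rw [sum_pairCount_eq_sum_powerset
      (fun n => p ^ n * (1 - p) ^ (pairCount (univ.erase 0 : Finset G) - n)) hT0 hT (by simp),
    sum_powerset_pow_mul_one_sub_pow _ _ hTM, pairCount_eq_card_image T]

theorem lambdaProb_add_lambdaProb_not (p : ℝ) (P : Finset G → Prop) :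
    lambdaProb G p P + lambdaProb G p (fun Λ => ¬ P Λ) = 1 := by
  classical
  have hsymm : ∀ g ∈ (univ.erase 0 : Finset G), -g ∈ univ.erase 0 := fun g hg =>
    mem_erase.2 ⟨neg_ne_zero.2 (ne_of_mem_erase hg), mem_univ _⟩
  have htotal := lambdaProb_subset p (notMem_erase 0 univ) hsymm
  rw [Nat.sub_self, pow_zero] at htotal
  rw [← htotal]
  unfold lambdaProb
  rw [← sum_add_distrib]
  refine sum_congr rfl fun Λ _ => ?_
  by_cases hΛ : IsSymmetricSubset Λ
  · have hsub : Λ ⊆ univ.erase 0 := fun g hg =>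
      mem_erase.2 ⟨ne_of_mem_of_not_mem hg hΛ.1, mem_univ g⟩
    by_cases hP : P Λ <;> simp [hΛ, hP, hsub]
  · simp [hΛ]

end Sampling

section Subgroups

variable {G : Type*} [AddGroup G] [Finite G]

namespace AddSubgroup

lemma two_mul_card_le_of_lt {H K : AddSubgroup G} (h : H < K) : 2 * Nat.card H ≤ Nat.card K := by
  obtain ⟨m, hm⟩ := card_dvd_of_le h.le
  have hm0 : m ≠ 0 := by
    rintro rfl
    exact Nat.card_pos.ne' (hm.trans (mul_zero _))
  have hm1 : m ≠ 1 := by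
    rintro rfl
    exact h.ne (eq_of_le_of_card_ge h.le (by rw [hm, mul_one]))
  rw [hm, mul_comm]
  exact Nat.mul_le_mul_left _ (by omega)

lemma exists_closure_range_eq (n : ℕ) (H : AddSubgroup G) (hH : Nat.card H ≤ 2 ^ n) :
    ∃ f : Fin n → G, closure (Set.range f) = H := by
  induction n generalizing H with
  | zero =>
    refine ⟨Fin.elim0, ?_⟩
    rw [Set.range_eq_empty, closure_empty, eq_comm]
    exact H.eq_bot_of_card_le hH
  | succ n ih =>
    rcases eq_or_ne H ⊥ with rfl | hH0
    · exact ⟨0, by simp⟩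
    obtain ⟨K, -, hKH⟩ := exists_le_covBy_of_lt (bot_lt_iff_ne_bot.2 hH0)
    obtain ⟨x, hxH, hxK⟩ := SetLike.exists_of_lt hKH.lt
    obtain ⟨f, hf⟩ := ih K (by have := two_mul_card_le_of_lt hKH.lt; rw [pow_succ] at hH; omega)
    refine ⟨Fin.cons x f, ?_⟩
    rw [Fin.range_cons, ← Set.singleton_union, closure_union, hf]
    refine (hKH.eq_or_eq le_sup_right (sup_le ((closure_le _).2 (by simpa)) hKH.le)).resolve_left
      fun h => hxK (h ▸ mem_sup_left (subset_closure rfl))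

end AddSubgroup

theorem card_addSubgroup_le_pow_clog :
    Nat.card (AddSubgroup G) ≤ Nat.card G ^ Nat.clog 2 (Nat.card G) := by
  have hsurj : Function.Surjective
      fun f : Fin (Nat.clog 2 (Nat.card G)) → G => AddSubgroup.closure (Set.range f) :=
    fun H => H.exists_closure_range_eq _
      (H.card_le_card_addGroup.trans (Nat.le_pow_clog one_lt_two _))
  calc Nat.card (AddSubgroup G) ≤ Nat.card (Fin (Nat.clog 2 (Nat.card G)) → G) :=
        Nat.card_le_card_of_surjective _ hsurj
    _ = _ := by rw [Nat.card_fun, Nat.card_fin]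

end Subgroups

section PairDeficit

variable {G : Type*} [AddCommGroup G] [DecidableEq G]

lemma card_sdiff_le_two_mul_pairCount_sub {S T : Finset G} (hTS : T ⊆ S)
    (hT : ∀ g ∈ T, -g ∈ T) : (S \ T).card ≤ 2 * (pairCount S - pairCount T) := by
  rw [pairCount_eq_card_image, pairCount_eq_card_image]
  have himage : (S \ T).image negPair ⊆ S.image negPair \ T.image negPair := by
    intro P hP
    obtain ⟨g, hg, rfl⟩ := mem_image.1 hP
    obtain ⟨hgS, hgT⟩ := mem_sdiff.1 hg
    refine mem_sdiff.2 ⟨mem_image_of_mem _ hgS, fun hmem => hgT ?_⟩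
    obtain ⟨t, ht, heq⟩ := mem_image.1 hmem
    rcases mem_negPair.1 (heq ▸ self_mem_negPair g) with rfl | rfl
    exacts [ht, hT t ht]
  have hfibre : ∀ P ∈ (S \ T).image negPair, {a ∈ S \ T | negPair a = P}.card ≤ 2 := by
    intro P hP
    obtain ⟨g, -, rfl⟩ := mem_image.1 hP
    refine (card_le_card fun a ha => ?_).trans (card_negPair_le g)
    exact (mem_filter.1 ha).2 ▸ self_mem_negPair a
  calc (S \ T).card ≤ 2 * ((S \ T).image negPair).card := card_le_mul_card_image _ 2 hfibre
    _ ≤ 2 * (S.image negPair \ T.image negPair).card := by gcongr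
    _ = _ := by rw [card_sdiff_of_subset (image_subset_image hTS)]

lemma card_le_four_mul_pairCount_sub [Fintype G] {H : AddSubgroup G} [DecidablePred (· ∈ H)]
    (hH : H ≠ ⊤) :
    Fintype.card G ≤
      4 * (pairCount (univ.erase 0 : Finset G) - pairCount ((univ.filter (· ∈ H)).erase 0)) := by
  have hsdiff : (univ.erase 0 : Finset G) \ (univ.filter (· ∈ H)).erase 0 =
      univ.filter (· ∉ H) := by
    ext g
    by_cases hg : g = 0 <;> simp [hg]
  have hcard : (univ.filter (· ∉ H)).card + Nat.card H = Fintype.card G := by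
    rw [Nat.card_eq_fintype_card, Fintype.card_subtype, add_comm,
      card_filter_add_card_filter_not, card_univ]
  have hhalf : 2 * Nat.card H ≤ Fintype.card G := by
    simpa [AddSubgroup.card_top] using AddSubgroup.two_mul_card_le_of_lt hH.lt_top
  have := card_sdiff_le_two_mul_pairCount_sub (erase_subset_erase 0 (subset_univ _))
    (T := (univ.filter (· ∈ H)).erase 0) fun g hg => by simp_all
  rw [hsdiff] at this
  omega

end PairDeficit

section Estimates

open Real

lemma one_le_log_natCast {k : ℕ} (hk : 3 ≤ k) : 1 ≤ log k := by
  rw [le_log_iff_exp_le (by positivity)]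
  have : (3 : ℝ) ≤ k := by exact_mod_cast hk
  linarith [exp_one_lt_d9]

lemma log_sq_le_rpow {x : ℝ} (hx : 1 ≤ x) : log x ^ 2 ≤ 25 / 4 * x ^ (4 / 5 : ℝ) := by
  have hlog := log_le_rpow_div (by linarith : 0 ≤ x) (by norm_num : (0 : ℝ) < 2 / 5)
  calc log x ^ 2 ≤ (x ^ (2 / 5 : ℝ) / (2 / 5)) ^ 2 := pow_le_pow_left₀ (log_nonneg hx) hlog 2
    _ = 25 / 4 * x ^ (4 / 5 : ℝ) := by
      rw [div_pow, ← rpow_natCast, ← rpow_mul (by linarith)]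
      norm_num
      ring

lemma clog_two_le_three_mul_log {k : ℕ} (hk : 3 ≤ k) : (Nat.clog 2 k : ℝ) ≤ 3 * log k := by
  have hpow := Nat.pow_pred_clog_lt_self one_lt_two (by omega : 1 < k)
  have hpred : ((Nat.clog 2 k).pred : ℝ) * log 2 ≤ log k := by
    rw [← log_pow]
    exact log_le_log (by positivity) (by exact_mod_cast hpow.le)
  have hclog : (Nat.clog 2 k : ℝ) ≤ (Nat.clog 2 k).pred + 1 := by
    exact_mod_cast Nat.le_succ_of_pred_le le_rfl
  nlinarith [log_two_gt_d9, one_le_log_natCast hk]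

lemma one_sub_pow_le_exp_neg_mul {p : ℝ} (hp : p ≤ 1) (m : ℕ) :
    (1 - p) ^ m ≤ exp (-(p * m)) := by
  calc (1 - p) ^ m ≤ exp (-p) ^ m := pow_le_pow_left₀ (by linarith) (one_sub_le_exp_neg p) m
    _ = exp (-(p * m)) := by rw [← exp_nat_mul, mul_neg, mul_comm]

lemma pow_clog_mul_exp_neg_le {k : ℕ} (hk : 3 ≤ k) {p : ℝ}
    (hp : 1000 * (k : ℝ) ^ (-(1 : ℝ) / 5) ≤ p) :
    (k : ℝ) ^ Nat.clog 2 k * exp (-(p * (k / 4))) ≤ exp (-(k : ℝ) ^ (4 / 5 : ℝ)) := by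
  -- `clog₂ k · log k ≤ 3 log² k ≤ 19 k^{4/5}` is dominated by `p k / 4 ≥ 250 k^{4/5}`.
  have hk0 : (0 : ℝ) < k := by positivity
  have hpk : 250 * (k : ℝ) ^ (4 / 5 : ℝ) ≤ p * (k / 4) := by
    have : (k : ℝ) ^ (4 / 5 : ℝ) = (k : ℝ) ^ (-(1 : ℝ) / 5) * k := by
      rw [← rpow_add_one hk0.ne']
      norm_num
    rw [this]
    nlinarith
  have hlog := log_sq_le_rpow (by exact_mod_cast (by omega : 1 ≤ k) : (1 : ℝ) ≤ k)
  have hclog := mul_le_mul_of_nonneg_right (clog_two_le_three_mul_log hk)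
    (log_nonneg (by exact_mod_cast (by omega : 1 ≤ k) : (1 : ℝ) ≤ k))
  rw [← rpow_natCast, rpow_def_of_pos hk0, ← exp_add]
  refine exp_le_exp.2 ?_
  nlinarith [rpow_nonneg hk0.le (4 / 5 : ℝ)]

end Estimates

section Generation

variable {G : Type*} [AddCommGroup G] [Fintype G] {p : ℝ}

open Real

lemma lambdaProb_subset_addSubgroup_le [DecidableEq G] (hp0 : 0 ≤ p) (hp1 : p ≤ 1)
    {H : AddSubgroup G} [DecidablePred (· ∈ H)] (hH : H ≠ ⊤) :
    lambdaProb G p (· ⊆ (univ.filter (· ∈ H)).erase 0) ≤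
      exp (-(p * (Fintype.card G / 4))) := by
  rw [lambdaProb_subset p (notMem_erase _ _) fun g hg => by simp_all]
  refine (one_sub_pow_le_exp_neg_mul hp1 _).trans (exp_le_exp.2 (neg_le_neg ?_))
  refine mul_le_mul_of_nonneg_left ?_ hp0
  rw [div_le_iff₀ (by norm_num), mul_comm]
  exact_mod_cast card_le_four_mul_pairCount_sub hH

theorem lambdaProb_closure_ne_top_le (hp0 : 0 ≤ p) (hp1 : p ≤ 1) :
    lambdaProb G p (fun Λ => ¬ AddSubgroup.closure (Λ : Set G) = ⊤) ≤
      Nat.card (AddSubgroup G) * exp (-(p * (Fintype.card G / 4))) := by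
  classical
  have := Fintype.ofFinite (AddSubgroup G)
  calc lambdaProb G p (fun Λ => ¬ AddSubgroup.closure (Λ : Set G) = ⊤)
      ≤ ∑ H ∈ univ.filter (· ≠ ⊤), lambdaProb G p (· ⊆ (univ.filter (· ∈ H)).erase 0) := by
        refine lambdaProb_le_sum hp0 hp1 _ _ fun Λ hΛ hne => ⟨_, by simpa using hne, fun g hg => ?_⟩
        exact mem_erase.2 ⟨ne_of_mem_of_not_mem hg hΛ.1,
          mem_filter.2 ⟨mem_univ g, AddSubgroup.subset_closure hg⟩⟩
    _ ≤ (univ.filter (· ≠ ⊤) : Finset (AddSubgroup G)).card • exp (-(p * (Fintype.card G / 4))) :=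
        sum_le_card_nsmul _ _ _ fun H hH =>
          lambdaProb_subset_addSubgroup_le hp0 hp1 (mem_filter.1 hH).2
    _ ≤ _ := by
        rw [nsmul_eq_mul, Nat.card_eq_fintype_card]
        gcongr
        exact card_filter_le _ _

end Generation

/-- If `min(p, 1-p) ≥ 10³ (log k̃)^{1/2} k̃^{-1/5}`, then with
probability `1 - o(1)` the random symmetric set `Λ` generates the group `G`. -/
theorem statement4 :
    ∀ ε : ℝ, 0 < ε →
      ∃ N : ℕ, ∀ (G : Type) [AddCommGroup G] [Fintype G] (p : ℝ),
        N ≤ Fintype.card G → 0 < p → p < 1 →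
        10 ^ 3 * Real.log (Fintype.card G) ^ ((1 : ℝ) / 2) *
            (Fintype.card G : ℝ) ^ (-(1 : ℝ) / 5) ≤ min p (1 - p) →
        1 - ε ≤ lambdaProb G p (fun Λ =>
          AddSubgroup.closure (Λ : Set G) = ⊤) := by
  intro ε hε
  have hlim : Tendsto (fun k : ℕ => Real.exp (-(k : ℝ) ^ (4 / 5 : ℝ))) atTop (nhds 0) :=
    Real.tendsto_exp_neg_atTop_nhds_zero.comp
      ((tendsto_rpow_atTop (by norm_num)).comp tendsto_natCast_atTop_atTop)
  obtain ⟨N, hN⟩ := eventually_atTop.1 (hlim.eventually (gt_mem_nhds hε))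
  refine ⟨max N 3, fun G _ _ p hGN hp0 hp1 hmin => ?_⟩
  set k := Fintype.card G
  have hk : 3 ≤ k := le_of_max_le_right hGN
  have hp : 1000 * (k : ℝ) ^ (-(1 : ℝ) / 5) ≤ p := by
    have hsqrt := Real.one_le_rpow (one_le_log_natCast hk) (by norm_num : (0 : ℝ) ≤ 1 / 2)
    nlinarith [min_le_left p (1 - p), Real.rpow_nonneg (Nat.cast_nonneg k) (-(1 : ℝ) / 5)]
  have hcount : (Nat.card (AddSubgroup G) : ℝ) ≤ (k : ℝ) ^ Nat.clog 2 k := by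
    exact_mod_cast Nat.card_eq_fintype_card (α := G) ▸ card_addSubgroup_le_pow_clog
  have hfail : lambdaProb G p (fun Λ => ¬ AddSubgroup.closure (Λ : Set G) = ⊤) < ε :=
    calc _ ≤ Nat.card (AddSubgroup G) * Real.exp (-(p * (k / 4))) :=
          lambdaProb_closure_ne_top_le hp0.le hp1.le
      _ ≤ (k : ℝ) ^ Nat.clog 2 k * Real.exp (-(p * (k / 4))) := by gcongr
      _ ≤ Real.exp (-(k : ℝ) ^ (4 / 5 : ℝ)) := pow_clog_mul_exp_neg_le hk hp
      _ < ε := hN k (le_of_max_le_left hGN)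
  linarith [lambdaProb_add_lambdaProb_not p fun Λ : Finset G => AddSubgroup.closure (Λ : Set G) = ⊤]
end

section
/- Let H̃ be a (q₀,δ₀)-typical Cayley graph of an abelian group of size k̃, and suppose 0<q<1/2 and 0<δ<1 satisfy q ≤ q₀ − (log k̃)/(4k̃), δ ≤ δ₀ − (log k̃)/(4k̃), and q₀ ≥ 4·k̃^{−1/5} + (log k̃)/(4k̃). Then every induced subgraph H of H̃ on at least k̃ − (1/4)·log k̃ vertices is a (q,δ)-reasonable induced subgraph of H̃. -/
/-!
Deleting at most `L = (log k̃)/4` vertices lowers every count in the definition of typicality by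
at most `L`, which the slack in `q` and `δ` absorbs; this gives (b) and (c). For primeness, a
module `U` of `H` containing `v ≠ w` contains every vertex of `K` distinguishing them, so
`|U| ≥ q₀k̃ - L ≥ 4k̃^{4/5}`. By (iii), fewer than `2k̃^{4/5}` vertices of `K ∖ U` are complete to
`U` and fewer than `2k̃^{4/5}` are anticomplete to it, so `|U| > (1 - q₀)k̃`; but then any vertex
of `K ∖ U` has degree above `(1 - q₀)k̃` or below `q₀k̃`.
-/

universe u v

open Filter

open Set

namespace SimpleGraph

variable {V : Type*} (H : SimpleGraph V)

def distinguishers (v w : V) : Set V :=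
  {u | u ≠ v ∧ u ≠ w ∧ Xor (H.Adj u v) (H.Adj u w)}

/-- For `U ⊆ K`: `U` is a module of `H.induce K`. -/
def IsModuleWithin (K U : Set V) : Prop :=
  ∀ x ∈ K \ U, (∀ y ∈ U, H.Adj x y) ∨ ∀ y ∈ U, ¬ H.Adj x y

def HasHomogeneousPair (m : ℝ) : Prop :=
  ∃ X Y : Set V, Disjoint X Y ∧ m ≤ (Nat.card X : ℝ) ∧ m ≤ (Nat.card Y : ℝ) ∧
    ((∀ x ∈ X, ∀ y ∈ Y, H.Adj x y) ∨ ∀ x ∈ X, ∀ y ∈ Y, ¬ H.Adj x y)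

variable {H}

theorem exists_isModuleWithin_of_not_isPrimeGraph_induce {K : Set V}
    (h : ¬ IsPrimeGraph (H.induce K)) :
    ∃ U ⊆ K, 2 ≤ U.ncard ∧ U.ncard < K.ncard ∧ H.IsModuleWithin K U := by
  obtain ⟨U, hU2, hUK, hU⟩ := not_not.mp h
  have hcard : (Subtype.val '' U).ncard = Nat.card U := by
    rw [ncard_image_of_injective _ Subtype.val_injective, Nat.card_coe_set_eq]
  refine ⟨Subtype.val '' U, Subtype.coe_image_subset K U, by rwa [hcard], ?_, ?_⟩
  · rwa [hcard, ← Nat.card_coe_set_eq K]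
  · rintro x ⟨hxK, hxU⟩
    have hx : (⟨x, hxK⟩ : K) ∉ U := fun h => hxU ⟨_, h, rfl⟩
    rcases hU ⟨x, hxK⟩ hx with hc | ha
    · exact .inl <| by rintro _ ⟨y, hy, rfl⟩; exact hc y hy
    · exact .inr <| by rintro _ ⟨y, hy, rfl⟩; exact ha y hy

theorem IsModuleWithin.distinguishers_subset {K U : Set V} (hU : H.IsModuleWithin K U)
    {v w : V} (hv : v ∈ U) (hw : w ∈ U) : H.distinguishers v w ⊆ U ∪ Kᶜ := by
  rintro u ⟨-, -, hxor⟩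
  by_contra hu
  simp only [mem_union, mem_compl_iff, not_or, not_not] at hu
  rcases hU u ⟨hu.2, hu.1⟩ with hc | ha
  · exact hxor.elim (fun h => h.2 (hc w hw)) (fun h => h.2 (hc v hv))
  · exact hxor.elim (fun h => ha v hv h.1) (fun h => ha w hw h.1)

theorem ncard_lt_of_not_hasHomogeneousPair {m : ℝ} (hfree : ¬ H.HasHomogeneousPair m)
    {X U : Set V} (hXU : Disjoint X U) (hU : m ≤ U.ncard)
    (hX : (∀ x ∈ X, ∀ y ∈ U, H.Adj x y) ∨ ∀ x ∈ X, ∀ y ∈ U, ¬ H.Adj x y) :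
    (X.ncard : ℝ) < m := by
  by_contra! hm
  exact hfree ⟨X, U, hXU, by rwa [Nat.card_coe_set_eq], by rwa [Nat.card_coe_set_eq], hX⟩

variable [Fintype V]

theorem IsModuleWithin.ncard_diff_lt {K U : Set V} (hU : H.IsModuleWithin K U) {m : ℝ}
    (hfree : ¬ H.HasHomogeneousPair m) (hm : m ≤ U.ncard) : ((K \ U).ncard : ℝ) < 2 * m := by
  set X := {x ∈ K \ U | ∀ y ∈ U, H.Adj x y}
  set Y := {x ∈ K \ U | ∀ y ∈ U, ¬ H.Adj x y}
  have hdisj : ∀ Z ⊆ K \ U, Disjoint Z U := fun Z hZ =>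
    Set.disjoint_left.mpr fun _ hz => (hZ hz).2
  have hX := ncard_lt_of_not_hasHomogeneousPair hfree (hdisj X (sep_subset _ _)) hm
    (.inl fun x hx => hx.2)
  have hY := ncard_lt_of_not_hasHomogeneousPair hfree (hdisj Y (sep_subset _ _)) hm
    (.inr fun x hx => hx.2)
  have hsplit : (K \ U).ncard ≤ X.ncard + Y.ncard :=
    (ncard_le_ncard fun x hx => (hU x hx).imp (⟨hx, ·⟩) (⟨hx, ·⟩)).trans (ncard_union_le _ _)
  have : ((K \ U).ncard : ℝ) ≤ X.ncard + Y.ncard := by exact_mod_cast hsplit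
  linarith

theorem ncard_le_ncard_neighborSet_or_add_le {U : Set V} {x : V}
    (hx : (∀ y ∈ U, H.Adj x y) ∨ ∀ y ∈ U, ¬ H.Adj x y) :
    U.ncard ≤ (H.neighborSet x).ncard ∨ (H.neighborSet x).ncard + U.ncard ≤ Fintype.card V := by
  refine hx.imp (fun hc => ncard_le_ncard hc) fun ha => ?_
  have hsub : H.neighborSet x ⊆ Uᶜ := fun y hy hyU => ha y hyU hy
  have hcompl := ncard_add_ncard_compl U
  rw [Nat.card_eq_fintype_card] at hcompl
  have := ncard_le_ncard hsub
  omega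

theorem isPrimeGraph_induce {q₀ m L : ℝ} {K : Set V}
    (hdeg : ∀ v, q₀ * Fintype.card V ≤ (Nat.card (H.neighborSet v) : ℝ) ∧
      (Nat.card (H.neighborSet v) : ℝ) ≤ (1 - q₀) * Fintype.card V)
    (hdist : ∀ v w, v ≠ w → q₀ * Fintype.card V ≤ (Nat.card (H.distinguishers v w) : ℝ))
    (hfree : ¬ H.HasHomogeneousPair m) (hK : (Kᶜ.ncard : ℝ) ≤ L)
    (hq₀ : 2 * m + L ≤ q₀ * Fintype.card V) :
    IsPrimeGraph (H.induce K) := by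
  by_contra hprime
  obtain ⟨U, hUK, hU2, hUlt, hU⟩ := exists_isModuleWithin_of_not_isPrimeGraph_induce hprime
  obtain ⟨v, w, hv, hw, hvw⟩ := (one_lt_ncard_iff).mp hU2
  have hUlarge : q₀ * Fintype.card V - L ≤ U.ncard := by
    have hsub := (ncard_le_ncard (hU.distinguishers_subset hv hw)).trans (ncard_union_le _ _)
    have : ((H.distinguishers v w).ncard : ℝ) ≤ U.ncard + Kᶜ.ncard := by exact_mod_cast hsub
    have := hdist v w hvw
    rw [Nat.card_coe_set_eq] at this
    linarith
  have hdiff := hU.ncard_diff_lt hfree (by linarith)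
  have hUhuge : (1 - q₀) * Fintype.card V < U.ncard := by
    have hsplit := ncard_sdiff_add_ncard_of_subset hUK
    have hcompl := ncard_add_ncard_compl K
    rw [Nat.card_eq_fintype_card] at hcompl
    have : ((K \ U).ncard : ℝ) + U.ncard + Kᶜ.ncard = Fintype.card V := by
      exact_mod_cast hsplit ▸ hcompl
    linarith
  obtain ⟨x, hx⟩ : (K \ U).Nonempty :=
    nonempty_of_ncard_ne_zero (by have := ncard_sdiff_add_ncard_of_subset hUK; omega)
  have hdegx := hdeg x
  rw [Nat.card_coe_set_eq] at hdegx
  rcases ncard_le_ncard_neighborSet_or_add_le (hU x hx) with hc | ha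
  · have : (U.ncard : ℝ) ≤ (H.neighborSet x).ncard := by exact_mod_cast hc
    linarith
  · have : ((H.neighborSet x).ncard : ℝ) + U.ncard ≤ Fintype.card V := by exact_mod_cast ha
    linarith

end SimpleGraph

theorem Set.mul_ncard_le_ncard_inter {α : Type*} [Fintype α] {K S : Set α} {q q₀ L : ℝ}
    (hq : 0 ≤ q) (hqq₀ : q * Fintype.card α ≤ q₀ * Fintype.card α - L)
    (hS : q₀ * Fintype.card α ≤ S.ncard) (hK : (Kᶜ.ncard : ℝ) ≤ L) :
    q * K.ncard ≤ (K ∩ S).ncard := by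
  have hsplit : S.ncard ≤ (K ∩ S).ncard + Kᶜ.ncard :=
    (ncard_le_ncard fun x hx => (em (x ∈ K)).imp (⟨·, hx⟩) id).trans (ncard_union_le _ _)
  have hcompl : K.ncard + Kᶜ.ncard = Fintype.card α :=
    (ncard_add_ncard_compl K).trans Nat.card_eq_fintype_card
  have hKq : q * K.ncard ≤ q * Fintype.card α :=
    mul_le_mul_of_nonneg_left (by exact_mod_cast hcompl ▸ Nat.le_add_right _ _) hq
  have : (S.ncard : ℝ) ≤ (K ∩ S).ncard + Kᶜ.ncard := by exact_mod_cast hsplit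
  linarith

theorem one_sub_mul_le_one_sub_mul {n k L δ δ₀ : ℝ} (hδ0 : 0 ≤ δ) (hδ1 : δ ≤ 1) (hL : 0 ≤ L)
    (hk : n - L ≤ k) (hδ : δ * n ≤ δ₀ * n - L) : (1 - δ₀) * n ≤ (1 - δ) * k := by
  nlinarith [mul_le_mul_of_nonneg_left hk (sub_nonneg.2 hδ1), mul_nonneg hδ0 hL]

theorem mul_le_sub_of_le_sub_div {a b c n : ℝ} (hn : 0 < n) (h : a ≤ b - c / n) :
    a * n ≤ b * n - c := by
  have := mul_le_mul_of_nonneg_right h hn.le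
  rwa [sub_mul, div_mul_cancel₀ _ hn.ne'] at this

theorem statement6_general {G : Type} [AddCommGroup G] [Fintype G] (Λ : Set G) (q₀ δ₀ q δ : ℝ)
    (htyp : IsTypical Λ q₀ δ₀)
    (hq0 : 0 < q) (hδ0 : 0 < δ) (hδ1 : δ < 1)
    (hq : q ≤ q₀ - Real.log (Fintype.card G) / (4 * (Fintype.card G : ℝ)))
    (hδ : δ ≤ δ₀ - Real.log (Fintype.card G) / (4 * (Fintype.card G : ℝ)))
    (hq₀ : 4 * (Fintype.card G : ℝ) ^ (-(1 : ℝ) / 5) +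
        Real.log (Fintype.card G) / (4 * (Fintype.card G : ℝ)) ≤ q₀)
    (K : Set G)
    (hK : (Fintype.card G : ℝ) - Real.log (Fintype.card G) / 4 ≤ (Nat.card K : ℝ)) :
    IsReasonable Λ K q δ := by
  obtain ⟨hdeg, hdist, hfree, hrigid⟩ := htyp
  have hn : (0 : ℝ) < Fintype.card G := by exact_mod_cast Fintype.card_pos
  rw [← div_div] at hq hδ hq₀
  have hKc : (Kᶜ.ncard : ℝ) ≤ Real.log (Fintype.card G) / 4 := by
    have : (K.ncard : ℝ) + Kᶜ.ncard = Fintype.card G := by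
      exact_mod_cast (ncard_add_ncard_compl K).trans Nat.card_eq_fintype_card
    rw [Nat.card_coe_set_eq] at hK
    linarith
  have hsize : 2 * (2 * (Fintype.card G : ℝ) ^ ((4 : ℝ) / 5)) + Real.log (Fintype.card G) / 4 ≤
      q₀ * Fintype.card G := by
    have := mul_le_sub_of_le_sub_div hn (le_sub_iff_add_le.mpr hq₀)
    rw [mul_assoc, ← Real.rpow_add_one hn.ne'] at this
    norm_num at this
    linarith
  refine ⟨SimpleGraph.isPrimeGraph_induce hdeg hdist hfree hKc hsize, fun v w hvw => ?_,
    fun X f hX => hrigid X f ?_⟩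
  · rw [Nat.card_coe_set_eq, Nat.card_coe_set_eq]
    exact Set.mul_ncard_le_ncard_inter (S := (cayleyGraph G Λ).distinguishers v w) hq0.le
      (mul_le_sub_of_le_sub_div hn hq) (by rw [← Nat.card_coe_set_eq]; exact hdist v w hvw) hKc
  · have hL := div_nonneg (Real.log_natCast_nonneg (Fintype.card G)) zero_le_four
    exact (one_sub_mul_le_one_sub_mul hδ0.le hδ1.le hL hK (mul_le_sub_of_le_sub_div hn hδ)).trans hX

/-- If `H̃` is a `(q₀, δ₀)`-typical Cayley graph of an abelian group of
size `k̃`, and `q ≤ q₀ - (log k̃)/(4k̃)`, `δ ≤ δ₀ - (log k̃)/(4k̃)`,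
`q₀ ≥ 4 k̃^{-1/5} + (log k̃)/(4k̃)`, then every induced subgraph of `H̃` on at least
`k̃ - (1/4) log k̃` vertices is `(q, δ)`-reasonable. -/
theorem statement6 {G : Type} [AddCommGroup G] [Fintype G] (Λ : Set G) (q₀ δ₀ q δ : ℝ)
    (hq₀0 : 0 < q₀) (hq₀1 : q₀ < 1 / 2) (hδ₀0 : 0 < δ₀) (hδ₀1 : δ₀ < 1)
    (htyp : IsTypical Λ q₀ δ₀)
    (hq0 : 0 < q) (hq1 : q < 1 / 2) (hδ0 : 0 < δ) (hδ1 : δ < 1)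
    (hq : q ≤ q₀ - Real.log (Fintype.card G) / (4 * (Fintype.card G : ℝ)))
    (hδ : δ ≤ δ₀ - Real.log (Fintype.card G) / (4 * (Fintype.card G : ℝ)))
    (hq₀ : 4 * (Fintype.card G : ℝ) ^ (-(1 : ℝ) / 5) +
        Real.log (Fintype.card G) / (4 * (Fintype.card G : ℝ)) ≤ q₀)
    (K : Set G)
    (hK : (Fintype.card G : ℝ) - Real.log (Fintype.card G) / 4 ≤ (Nat.card K : ℝ)) :
    IsReasonable Λ K q δ :=
  statement6_general Λ q₀ δ₀ q δ htyp hq0 hδ0 hδ1 hq hδ hq₀ K hK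
end

section
/- Let H be a (q,δ)-reasonable induced subgraph of a Cayley graph H̃ of an abelian group (for some 0<q<1/2 and 0<δ<1). If Γ is a blow-up of H̃ with parts W_i for i ∈ V(H̃), then every embedding H ↪ Γ either maps all of V(H) into a single part W_i, or there exists a rotation or reflection φ of H̃ such that each vertex x ∈ V(H) is mapped into W_{φ(x)}. -/
universe u v

open Filter

/-! Let `ι x` be the index of the part of the blow-up containing `θ x`. Two vertices of `H` with
different indices are adjacent exactly when their indices are adjacent in `H̃`, so every fibre of
`ι` is a homogeneous set of `H`. As `H` is prime, `ι` is either constant or injective; in the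
latter case it is an isomorphism of `H` onto an induced subgraph of `H̃`, and rigidity of
reasonable subgraphs (applied with `X = V(H)`) makes it a rotation or reflection. -/

section Blowup

variable {α β : Type*} {H : SimpleGraph α} {Γ : SimpleGraph β} {W : α → Set β}

noncomputable def IsBlowupWith.part (hW : IsBlowupWith H Γ W) (x : β) : α :=
  (hW.2.1 x).exists.choose

theorem IsBlowupWith.mem_part (hW : IsBlowupWith H Γ W) (x : β) : x ∈ W (hW.part x) :=
  (hW.2.1 x).exists.choose_spec

theorem IsBlowupWith.adj_iff_of_part_ne (hW : IsBlowupWith H Γ W) {x y : β}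
    (h : hW.part x ≠ hW.part y) : Γ.Adj x y ↔ H.Adj (hW.part x) (hW.part y) :=
  hW.2.2 _ _ h _ (hW.mem_part x) _ (hW.mem_part y)

end Blowup

section Prime

variable {γ α : Type*} {F : SimpleGraph γ}

theorem IsPrimeGraph.subsingleton_or_eq_univ [Finite γ] (hF : IsPrimeGraph F) {U : Set γ}
    (hU : ∀ x ∉ U, (∀ y ∈ U, F.Adj x y) ∨ ∀ y ∈ U, ¬ F.Adj x y) :
    U.Subsingleton ∨ U = Set.univ := by
  by_contra! h
  obtain ⟨hnontriv, hne⟩ := h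
  refine hF ⟨U, ?_, ?_, hU⟩
  · rw [Nat.card_coe_set_eq]
    exact Set.one_lt_ncard_iff_nontrivial.mpr hnontriv
  · rw [Nat.card_coe_set_eq]
    exact Set.ncard_lt_card hne

theorem homogeneous_fiber {H : SimpleGraph α} (ι : γ → α)
    (hι : ∀ x y, ι x ≠ ι y → (F.Adj x y ↔ H.Adj (ι x) (ι y))) (a : γ) :
    ∀ x ∉ {z | ι z = ι a}, (∀ y ∈ {z | ι z = ι a}, F.Adj x y) ∨
      ∀ y ∈ {z | ι z = ι a}, ¬ F.Adj x y := by
  intro x hx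
  have hxy : ∀ y ∈ {z | ι z = ι a}, (F.Adj x y ↔ H.Adj (ι x) (ι a)) := by
    intro y (hy : ι y = ι a)
    rw [← hy]
    exact hι x y (hy ▸ hx)
  by_cases hA : H.Adj (ι x) (ι a)
  · exact Or.inl fun y hy => (hxy y hy).mpr hA
  · exact Or.inr fun y hy hadj => hA ((hxy y hy).mp hadj)

theorem IsPrimeGraph.injective_or_forall_eq [Finite γ] (hF : IsPrimeGraph F)
    {H : SimpleGraph α} (ι : γ → α) (hι : ∀ x y, ι x ≠ ι y → (F.Adj x y ↔ H.Adj (ι x) (ι y))) :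
    Function.Injective ι ∨ ∀ x y, ι x = ι y := by
  by_contra! h
  obtain ⟨hninj, x, y, hxy⟩ := h
  obtain ⟨a, b, hab, hne⟩ := Function.not_injective_iff.mp hninj
  rcases hF.subsingleton_or_eq_univ (homogeneous_fiber ι hι a) with hsub | huniv
  · exact hne (hsub rfl hab.symm)
  · have hx : ι x = ι a := Set.eq_univ_iff_forall.mp huniv x
    have hy : ι y = ι a := Set.eq_univ_iff_forall.mp huniv y
    exact hxy (hx.trans hy.symm)

end Prime

theorem IsReasonable.exists_isRotOrRefl {G : Type*} [AddCommGroup G] [Fintype G]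
    {Λ K : Set G} {q δ : ℝ} (hreas : IsReasonable Λ K q δ) (hδ : 0 ≤ δ) (ι : K → G)
    (hinj : Function.Injective ι)
    (hadj : ∀ x y : K, x ≠ y → ((cayleyGraph G Λ).Adj (ι x) (ι y) ↔ (cayleyGraph G Λ).Adj x y)) :
    ∃ φ : G → G, IsRotOrRefl φ ∧ ∀ x : K, ι x = φ x := by
  classical
  set f : G → G := fun g => if h : g ∈ K then ι ⟨g, h⟩ else g
  have hf : ∀ x : K, f x = ι x := fun x => dif_pos x.2
  have hcard : (1 - δ) * (Nat.card K : ℝ) ≤ Nat.card K := by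
    nlinarith [Nat.cast_nonneg (α := ℝ) (Nat.card K)]
  have hinjOn : Set.InjOn f K := fun v hv w hw h => by
    rw [hf ⟨v, hv⟩, hf ⟨w, hw⟩] at h
    exact congrArg Subtype.val (hinj h)
  obtain ⟨φ, hφ, heq⟩ := hreas.2.2 K f hcard hinjOn fun v hv w hw hvw => by
    rw [hf ⟨v, hv⟩, hf ⟨w, hw⟩]
    exact hadj ⟨v, hv⟩ ⟨w, hw⟩ (Subtype.coe_ne_coe.mp hvw)
  exact ⟨φ, hφ, fun x => (hf x).symm.trans (heq x.2)⟩

theorem statement8_general {G : Type} [AddCommGroup G] [Fintype G] (Λ : Set G)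
    (K : Set G) (q δ : ℝ) (hδ0 : 0 < δ)
    (hreas : IsReasonable Λ K q δ)
    {β : Type} (Γ : SimpleGraph β) (W : G → Set β)
    (hblow : IsBlowupWith (cayleyGraph G Λ) Γ W)
    (θ : (cayleyGraph G Λ).induce K ↪g Γ) :
    (∃ i : G, ∀ x : K, θ x ∈ W i) ∨
      ∃ φ : G → G, IsRotOrRefl φ ∧ ∀ x : K, θ x ∈ W (φ ↑x) := by
  set ι : K → G := fun x => hblow.part (θ x)
  have hι : ∀ x y, ι x ≠ ι y →
      (((cayleyGraph G Λ).induce K).Adj x y ↔ (cayleyGraph G Λ).Adj (ι x) (ι y)) :=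
    fun x y h => θ.map_adj_iff.symm.trans (hblow.adj_iff_of_part_ne h)
  rcases hreas.1.injective_or_forall_eq ι hι with hinj | hconst
  · obtain ⟨φ, hφ, hιφ⟩ := hreas.exists_isRotOrRefl hδ0.le ι hinj
      fun x y hxy => (hι x y (hinj.ne hxy)).symm
    exact Or.inr ⟨φ, hφ, fun x => hιφ x ▸ hblow.mem_part (θ x)⟩
  · rcases isEmpty_or_nonempty K with hK | ⟨⟨x₀⟩⟩
    · exact Or.inl ⟨0, fun x => isEmptyElim x⟩
    · exact Or.inl ⟨ι x₀, fun x => hconst x x₀ ▸ hblow.mem_part (θ x)⟩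

/-- Let `H` be a `(q, δ)`-reasonable induced subgraph of a Cayley graph
`H̃` and let `Γ` be a blow-up of `H̃` with parts `W i`. Then every embedding `H ↪ Γ`
either maps all of `V(H)` into a single part, or there is a rotation or reflection `φ`
of `H̃` such that every `x ∈ V(H)` is mapped into `W (φ x)`. -/
theorem statement8 {G : Type} [AddCommGroup G] [Fintype G] (Λ : Set G)
    (K : Set G) (q δ : ℝ) (hq0 : 0 < q) (hq1 : q < 1 / 2) (hδ0 : 0 < δ) (hδ1 : δ < 1)
    (hK : (Fintype.card G : ℝ) - Real.log (Fintype.card G) / 4 ≤ (Nat.card K : ℝ))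
    (hreas : IsReasonable Λ K q δ)
    {β : Type} [Fintype β] (Γ : SimpleGraph β) (W : G → Set β)
    (hblow : IsBlowupWith (cayleyGraph G Λ) Γ W)
    (θ : (cayleyGraph G Λ).induce K ↪g Γ) :
    (∃ i : G, ∀ x : K, θ x ∈ W i) ∨
      ∃ φ : G → G, IsRotOrRefl φ ∧ ∀ x : K, θ x ∈ W (φ ↑x) :=
  statement8_general Λ K q δ hδ0 hreas Γ W hblow θ
end

section
/- Let k̃ ≥ 10^{200}, let H̃ be a Cayley graph of an abelian group of size k̃, and let H be a (q,δ)-reasonable induced subgraph of H̃ on k ≥ k̃ − (1/4)·log k̃ vertices, where 10^4·(log k)^{6/5}·k^{−1/5} ≤ q ≤ 10^{−20} and 0<δ<1. Then for every subset X ⊆ V(H) of size |X| ≥ (1−q/2)·k, there is a signature S of H with S ⊆ X and |S| ≤ (5/q)·log k. -/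
universe u v

open Filter

/-!
Every pair of distinct vertices of `H` is distinguished by at least `q k` vertices of `H`, hence by
at least `(q/2)|X|` vertices of `X`. By averaging, some vertex of `X` distinguishes a `q/2`
fraction of the pairs not yet distinguished, so adding such vertices greedily leaves at most
`k² (1 - q/2)ⁿ ≤ k² e^{-qn/2}` undistinguished pairs after `n` steps, and none once
`n > (4/q) log k`.
-/

open Finset Real

namespace Finset

theorem half_mul_card_le_card_filter {α : Type*} [Fintype α] {s : Finset α}
    {p : α → Prop} [DecidablePred p] {q : ℝ} (hq : 0 ≤ q)
    (hp : q * Fintype.card α ≤ #{a | p a}) (hs : (1 - q / 2) * Fintype.card α ≤ #s) :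
    q / 2 * #s ≤ #{a ∈ s | p a} := by
  classical
  have hsplit : #{a | p a} ≤ #{a ∈ s | p a} + #sᶜ := by
    refine card_le_card_sdiff_add_card.trans (Nat.add_le_add_right (card_le_card fun a => ?_) _)
    simp only [mem_sdiff, mem_filter, mem_univ, true_and, mem_compl, not_not]
    exact fun ⟨hp, hs⟩ => ⟨hs, hp⟩
  have hcompl : (#sᶜ : ℝ) = Fintype.card α - #s := by
    rw [card_compl, Nat.cast_sub (card_le_univ s)]
  have hsα : (#s : ℝ) ≤ Fintype.card α := by exact_mod_cast card_le_univ s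
  have hsplit' : (#{a | p a} : ℝ) ≤ #{a ∈ s | p a} + #sᶜ := by exact_mod_cast hsplit
  nlinarith

variable {α β : Type*} {s : Finset α} {t : Finset β} {r : α → β → Prop}
  [∀ a b, Decidable (r a b)] {c : ℝ}

theorem exists_mul_card_le_card_filter (hs : s.Nonempty)
    (h : ∀ b ∈ t, c * #s ≤ #{a ∈ s | r a b}) : ∃ a ∈ s, c * #t ≤ #{b ∈ t | r a b} := by
  refine exists_le_of_sum_le hs ?_
  have hcount : ∑ a ∈ s, (#{b ∈ t | r a b} : ℝ) = ∑ b ∈ t, (#{a ∈ s | r a b} : ℝ) := by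
    exact_mod_cast sum_card_bipartiteAbove_eq_sum_card_bipartiteBelow r
  calc ∑ _a ∈ s, c * #t = ∑ _b ∈ t, c * #s := by simp only [sum_const, nsmul_eq_mul]; ring
    _ ≤ ∑ b ∈ t, (#{a ∈ s | r a b} : ℝ) := sum_le_sum h
    _ = ∑ a ∈ s, (#{b ∈ t | r a b} : ℝ) := hcount.symm

theorem exists_subset_card_le_card_filter_forall_not_le (hs : s.Nonempty) (hc : c ≤ 1)
    (h : ∀ b ∈ t, c * #s ≤ #{a ∈ s | r a b}) (n : ℕ) :
    ∃ u ⊆ s, #u ≤ n ∧ (#{b ∈ t | ∀ a ∈ u, ¬ r a b} : ℝ) ≤ (1 - c) ^ n * #t := by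
  classical
  induction n with
  | zero => exact ⟨∅, empty_subset _, le_rfl, by simp⟩
  | succ n ih =>
    obtain ⟨u, hus, hun, hu⟩ := ih
    set t' : Finset β := {b ∈ t | ∀ a ∈ u, ¬ r a b}
    obtain ⟨a, has, ha⟩ :=
      exists_mul_card_le_card_filter (t := t') hs fun b hb => h b (mem_filter.1 hb).1
    have hsplit : (#{b ∈ t' | r a b} : ℝ) + #{b ∈ t' | ¬ r a b} = #t' := by
      exact_mod_cast card_filter_add_card_filter_not (s := t') (r a)
    have hinsert : {b ∈ t | ∀ x ∈ insert a u, ¬ r x b} = {b ∈ t' | ¬ r a b} := by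
      ext b; simp only [t', mem_filter, forall_mem_insert]; tauto
    refine ⟨insert a u, insert_subset has hus, (card_insert_le a u).trans (by omega), ?_⟩
    calc (#{b ∈ t | ∀ x ∈ insert a u, ¬ r x b} : ℝ) = #{b ∈ t' | ¬ r a b} := by rw [hinsert]
      _ ≤ (1 - c) * #t' := by linarith
      _ ≤ (1 - c) * ((1 - c) ^ n * #t) := mul_le_mul_of_nonneg_left hu (by linarith)
      _ = (1 - c) ^ (n + 1) * #t := by ring

theorem exists_subset_card_le_forall_exists (hs : s.Nonempty) (hc0 : 0 < c) (hc1 : c ≤ 1)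
    (h : ∀ b ∈ t, c * #s ≤ #{a ∈ s | r a b}) :
    ∃ u ⊆ s, (#u : ℝ) ≤ log #t / c + 1 ∧ ∀ b ∈ t, ∃ a ∈ u, r a b := by
  set n := ⌊log #t / c⌋₊ + 1
  obtain ⟨u, hus, hun, hu⟩ := exists_subset_card_le_card_filter_forall_not_le hs hc1 h n
  have hcn : log #t < c * n := by
    have := Nat.lt_floor_add_one (log #t / c)
    rw [div_lt_iff₀ hc0] at this
    push_cast [n]; linarith
  have hfew : (#{b ∈ t | ∀ a ∈ u, ¬ r a b} : ℝ) < 1 := by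
    refine hu.trans_lt ?_
    rcases (#t).eq_zero_or_pos with ht | ht
    · simp [ht]
    calc (1 - c) ^ n * #t ≤ exp (-c) ^ n * exp (log #t) := by
          rw [exp_log (by exact_mod_cast ht)]
          gcongr
          linarith [add_one_le_exp (-c)]
      _ = exp (log #t - c * n) := by rw [← exp_nat_mul, ← exp_add]; ring_nf
      _ < 1 := exp_lt_one_iff.2 (by linarith)
  refine ⟨u, hus, ?_, fun b hb => ?_⟩
  · calc (#u : ℝ) ≤ n := by exact_mod_cast hun
      _ ≤ log #t / c + 1 := by
        push_cast [n]; gcongr; exact Nat.floor_le (div_nonneg (log_natCast_nonneg _) hc0.le)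
  · have hempty : {b ∈ t | ∀ a ∈ u, ¬ r a b} = ∅ := by
      rw [← card_eq_zero]; exact_mod_cast Nat.lt_one_iff.1 (by exact_mod_cast hfew)
    simpa using filter_eq_empty_iff.1 hempty hb

end Finset

theorem isSignature_of_forall_exists_xor {V : Type*} (H : SimpleGraph V) {S : Set V}
    (h : ∀ v w, v ≠ w → ∃ u ∈ S, Xor (H.Adj u v) (H.Adj u w)) : IsSignature H S := by
  intro v _ w _ hvw hvS
  obtain ⟨u, huS, hu⟩ := h v w hvw
  have hmem : u ∈ H.neighborSet v ∩ S ↔ u ∈ H.neighborSet w ∩ S := by rw [hvS]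
  simp only [Set.mem_inter_iff, SimpleGraph.mem_neighborSet, huS, and_true] at hmem
  rcases hu with ⟨hv, hw⟩ | ⟨hw, hv⟩
  · exact hw (hmem.1 hv.symm).symm
  · exact hv (hmem.2 hw.symm).symm

theorem exists_isSignature_subset_card_le {V : Type*} [Fintype V] (H : SimpleGraph V)
    [DecidableRel H.Adj] {X : Finset V} (hX : X.Nonempty) {r : ℝ} (hr0 : 0 < r) (hr1 : r ≤ 1)
    (hsep : ∀ v w, v ≠ w → r * #X ≤ #{u ∈ X | Xor (H.Adj u v) (H.Adj u w)}) :
    ∃ S ⊆ X, IsSignature H S ∧ (#S : ℝ) ≤ 2 * log (Fintype.card V) / r + 1 := by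
  classical
  obtain ⟨S, hSX, hS, hcover⟩ := exists_subset_card_le_forall_exists (t := univ.offDiag)
    (r := fun u p => Xor (H.Adj u p.1) (H.Adj u p.2)) hX hr0 hr1
    fun p hp => hsep p.1 p.2 (mem_offDiag.1 hp).2.2
  have hpairs : log #(univ : Finset V).offDiag ≤ 2 * log (Fintype.card V) := by
    rcases (#(univ : Finset V).offDiag).eq_zero_or_pos with h0 | hpos
    · rw [h0, Nat.cast_zero, log_zero]; exact mul_nonneg zero_le_two (log_natCast_nonneg _)
    have hsq : #(univ : Finset V).offDiag ≤ Fintype.card V ^ 2 := by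
      rw [offDiag_card, card_univ, sq]; exact Nat.sub_le _ _
    calc log #(univ : Finset V).offDiag ≤ log ((Fintype.card V : ℝ) ^ 2) :=
          log_le_log (by exact_mod_cast hpos) (by exact_mod_cast hsq)
      _ = 2 * log (Fintype.card V) := by rw [log_pow]; norm_num
  refine ⟨S, hSX, isSignature_of_forall_exists_xor H fun v w hvw => ?_, hS.trans ?_⟩
  · simpa using hcover (v, w) (by simpa using hvw)
  · gcongr

theorem Nat.card_setOf_mem_and {α : Type*} (K : Set α) [Fintype K] (p : α → Prop)
    [DecidablePred p] : Nat.card {u | u ∈ K ∧ p u} = #{u : K | p u} := by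
  rw [← Fintype.card_subtype, ← Nat.card_eq_fintype_card]
  exact Nat.card_congr (Equiv.subtypeSubtypeEquivSubtypeInter (· ∈ K) p).symm

open Classical in
theorem le_card_filter_xor_of_isReasonable {G : Type*} [AddCommGroup G] [Fintype G]
    {Λ K : Set G} {q δ : ℝ} (hreas : IsReasonable Λ K q δ) {v w : K} (hvw : v ≠ w) :
    q * Fintype.card K ≤
      #{u : K | Xor ((cayleyGraph G Λ).induce K |>.Adj u v)
        ((cayleyGraph G Λ).induce K |>.Adj u w)} := by
  rw [← Nat.card_eq_fintype_card]
  refine (hreas.2.1 v w (Subtype.coe_injective.ne hvw)).trans ?_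
  rw [Nat.card_setOf_mem_and]
  exact_mod_cast card_le_card fun u => by
    simp only [mem_filter]; exact fun h => ⟨h.1, h.2.2.2⟩

theorem statement10_general {G : Type} [AddCommGroup G] [Fintype G] (Λ : Set G)
    (K : Set G) (q δ : ℝ) (hq0 : 0 < q) (hq1 : q < 1 / 2)
    (hreas : IsReasonable Λ K q δ)
    (X : Set K) (hX : (1 - q / 2) * (Nat.card K : ℝ) ≤ (Nat.card X : ℝ)) :
    ∃ S : Set K, S ⊆ X ∧ IsSignature ((cayleyGraph G Λ).induce K) S ∧
      (Nat.card S : ℝ) ≤ 5 / q * Real.log (Nat.card K) := by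
  classical
  rcases le_or_gt (Nat.card K) 1 with hk | hk
  · have : Subsingleton K := Finite.card_le_one_iff_subsingleton.1 hk
    refine ⟨∅, Set.empty_subset _, fun v _ w _ hvw => (hvw (Subsingleton.elim v w)).elim, ?_⟩
    simpa using mul_nonneg (by positivity : 0 ≤ 5 / q) (log_natCast_nonneg _)
  rw [Nat.card_eq_card_toFinset X] at hX
  rw [Nat.card_eq_fintype_card] at hX hk ⊢
  have hXne : X.toFinset.Nonempty := by
    have : (1 : ℝ) < Fintype.card K := by exact_mod_cast hk
    rw [← card_pos]; exact_mod_cast (by nlinarith : (0 : ℝ) < #X.toFinset)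
  obtain ⟨S, hSX, hS, hScard⟩ := exists_isSignature_subset_card_le _ hXne (r := q / 2)
    (by positivity) (by linarith) fun v w hvw =>
      half_mul_card_le_card_filter hq0.le (le_card_filter_xor_of_isReasonable hreas hvw) hX
  have hqL : q ≤ log (Fintype.card K) := by
    have : log 2 ≤ log (Fintype.card K) := log_le_log two_pos (by exact_mod_cast hk)
    linarith [log_two_gt_d9]
  refine ⟨S, fun u hu => Set.mem_toFinset.1 (hSX hu), hS, ?_⟩
  rw [Nat.card_coe_set_eq, Set.ncard_coe_finset]
  calc (#S : ℝ) ≤ 2 * log (Fintype.card K) / (q / 2) + 1 := hScard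
    _ ≤ 5 / q * log (Fintype.card K) := by
      rw [div_div_eq_mul_div, div_add_one hq0.ne', div_mul_eq_mul_div]
      gcongr
      linarith

/-- Let `k̃ ≥ 10^200` and let `H` be a `(q, δ)`-reasonable induced
subgraph of a Cayley graph of size `k̃`, on `k ≥ k̃ - (1/4) log k̃` vertices, with
`10⁴ (log k)^{6/5} k^{-1/5} ≤ q ≤ 10^{-20}`. Then every `X ⊆ V(H)` with
`|X| ≥ (1 - q/2)k` contains a signature `S` of `H` with `|S| ≤ (5/q) log k`. -/
theorem statement10 {G : Type} [AddCommGroup G] [Fintype G] (Λ : Set G)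
    (hcard : 10 ^ 200 ≤ Fintype.card G)
    (K : Set G) (q δ : ℝ) (hq0 : 0 < q) (hq1 : q < 1 / 2) (hδ0 : 0 < δ) (hδ1 : δ < 1)
    (hK : (Fintype.card G : ℝ) - Real.log (Fintype.card G) / 4 ≤ (Nat.card K : ℝ))
    (hreas : IsReasonable Λ K q δ)
    (hqlow : 10 ^ 4 * Real.log (Nat.card K) ^ ((6 : ℝ) / 5) *
        (Nat.card K : ℝ) ^ (-(1 : ℝ) / 5) ≤ q)
    (hqhigh : q ≤ 1 / 10 ^ 20)
    (X : Set K) (hX : (1 - q / 2) * (Nat.card K : ℝ) ≤ (Nat.card X : ℝ)) :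
    ∃ S : Set K, S ⊆ X ∧ IsSignature ((cayleyGraph G Λ).induce K) S ∧
      (Nat.card S : ℝ) ≤ 5 / q * Real.log (Nat.card K) :=
  statement10_general Λ K q δ hq0 hq1 hreas X hX
end

section
/- Let ℓ, ℓ' ≥ 1 and m, m' ≥ 0 be integers. Then: (i) for any non-negative integers m̃₁,…,m̃_ℓ with m̃₁+…+m̃_ℓ ≤ m, one has m̃₁⋯m̃_ℓ ≤ E_ℓ(m); (ii) E_ℓ(m)·E_{ℓ'}(m') ≤ E_{ℓ+ℓ'}(m+m'); (iii) if m ≥ ℓ, ℓ' ≤ ℓ, and m' ≤ (1−μ)·m for some real μ ≥ 0, then E_{ℓ'}(m') ≤ e^{3(ℓ−ℓ') − μℓ/2}·(ℓ/m)^{ℓ−ℓ'}·E_ℓ(m). -/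
universe u v

open Filter

/-!
`E_ℓ(m)` is the product of the balanced partition of `m` into `ℓ` parts, and passing from `m` to
`m + 1` raises one smallest part `Q = ⌊m/ℓ⌋` to `Q + 1`. Hence `a ↦ a · E_ℓ(m - a)` decreases once
`a ≥ ⌈m/(ℓ+1)⌉`, where it equals `E_{ℓ+1}(m)`; splitting off the largest factor gives (i) by
induction, and (ii) is (i) applied to two concatenated balanced partitions.

For (iii) let `q = ⌊m/ℓ⌋`, `k = ℓ - ℓ'` and let `b = m - kq` be what remains after removing `k`
parts of size `q`. By (ii), `E_{ℓ'}(b) q^k ≤ E_ℓ(m)`, and `ℓq/m ≥ 1/2 ≥ e⁻¹`. If `m' ≤ b`, then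
`m' ≤ (1-μ)m ≤ e^{k/ℓ' - μ} b` and `E_{ℓ'}(t)² / t^{ℓ'}` is nondecreasing, because each step
multiplies it by `((Q+1)/Q)² (t/(t+1))^{ℓ'} ≥ 1` (as `e^x ≤ (1+x)²` on `[0, 1]`). If `m' > b`, then
`μℓ ≤ k`, and each of the `kq` steps from `b` to `m` multiplies `E_{ℓ'}` by at most `(q+1)/q`, for
a total factor at most `e^k`.
-/

open Finset Real

theorem epart_mul_add {l q r : ℕ} (hr : r ≤ l) :
    Epart l (l * q + r) = (q + 1) ^ r * q ^ (l - r) := by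
  rcases hr.lt_or_eq with hr | rfl
  · have hdiv : (l * q + r) / l = q := by
      rw [Nat.mul_add_div (by omega), Nat.div_eq_of_lt hr, add_zero]
    rw [Epart, hdiv, Nat.mul_add_mod, Nat.mod_eq_of_lt hr]
  · rcases Nat.eq_zero_or_pos r with rfl | hr
    · simp [Epart]
    · rw [Epart, ← mul_add_one, Nat.mul_div_cancel_left _ hr, Nat.mul_mod_right]
      simp

theorem epart_mul (l q : ℕ) : Epart l (l * q) = q ^ l := by
  simpa using epart_mul_add (q := q) (Nat.zero_le l)

theorem epart_zero_left (m : ℕ) : Epart 0 m = 1 := by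
  simp [Epart]

theorem epart_eq_zero_of_lt {l m : ℕ} (h : m < l) : Epart l m = 0 := by
  simpa [zero_pow (Nat.sub_ne_zero_of_lt h)] using epart_mul_add (q := 0) h.le

theorem epart_succ_mul_div {l : ℕ} (hl : 0 < l) (t : ℕ) :
    Epart l (t + 1) * (t / l) = Epart l t * (t / l + 1) := by
  obtain ⟨q, r, hr, rfl⟩ : ∃ q r, r < l ∧ t = l * q + r :=
    ⟨t / l, t % l, Nat.mod_lt t hl, (Nat.div_add_mod t l).symm⟩
  rw [Nat.mul_add_div hl, Nat.div_eq_of_lt hr, add_zero, add_assoc,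
    epart_mul_add (show r + 1 ≤ l from hr), epart_mul_add hr.le,
    show l - r = l - (r + 1) + 1 by omega]
  ring

theorem epart_succ_mul_le {l q t : ℕ} (h : l * q ≤ t) :
    Epart l (t + 1) * q ≤ Epart l t * (q + 1) := by
  rcases Nat.eq_zero_or_pos l with rfl | hl
  · simp [epart_zero_left]
  rcases Nat.eq_zero_or_pos q with rfl | hq
  · simp
  have hqQ : q ≤ t / l := (Nat.le_div_iff_mul_le hl).2 (by linarith [mul_comm l q])
  refine Nat.le_of_mul_le_mul_right ?_ (hq.trans_le hqQ)
  calc Epart l (t + 1) * q * (t / l) = Epart l t * (t / l + 1) * q := by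
        rw [← epart_succ_mul_div hl]; ring
    _ ≤ Epart l t * (q + 1) * (t / l) := by
        rw [mul_assoc, mul_assoc]; exact Nat.mul_le_mul_left _ (by nlinarith)

theorem epart_mul_succ_le {l a t : ℕ} (h : t < l * a) :
    Epart l t * (a + 1) ≤ Epart l (t + 1) * a := by
  have hl : 0 < l := Nat.pos_of_ne_zero (by rintro rfl; simp at h)
  have hQa : t / l < a := (Nat.div_lt_iff_lt_mul hl).2 (by linarith [mul_comm l a])
  refine Nat.le_of_mul_le_mul_right (c := t / l + 1) ?_ (Nat.succ_pos _)
  calc Epart l t * (a + 1) * (t / l + 1) = Epart l (t + 1) * (t / l) * (a + 1) := by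
        rw [epart_succ_mul_div hl]; ring
    _ ≤ Epart l (t + 1) * a * (t / l + 1) := by
        rw [mul_assoc, mul_assoc]; exact Nat.mul_le_mul_left _ (by nlinarith)

theorem mul_epart_sub_le_epart_succ {l m a : ℕ} (hm : m ≤ (l + 1) * a) (ha : a ≤ m) :
    a * Epart l (m - a) ≤ Epart (l + 1) m := by
  obtain _ | m := m
  · simp_all
  have hr : m % (l + 1) < l + 1 := Nat.mod_lt _ (by omega)
  have hm' := Nat.div_add_mod m (l + 1)
  set q := m / (l + 1)
  set r := m % (l + 1)
  have hqa : q + 1 ≤ a := by nlinarith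
  clear hm
  induction a, hqa using Nat.le_induction with
  | base =>
    apply le_of_eq
    rw [show m + 1 - (q + 1) = l * q + r by rw [← hm']; ring_nf; omega,
      epart_mul_add (by omega : r ≤ l), ← hm', add_assoc, epart_mul_add (by omega : r + 1 ≤ l + 1),
      show l + 1 - (r + 1) = l - r by omega]
    ring
  | succ a hqa ih =>
    have hlt : m - a < l * a := by
      have : (l + 1) * (q + 1) ≤ (l + 1) * a := Nat.mul_le_mul_left _ hqa
      have : m - a + a < l * a + a := by rw [Nat.sub_add_cancel (by omega)]; nlinarith
      omega
    calc (a + 1) * Epart l (m + 1 - (a + 1)) = Epart l (m - a) * (a + 1) := by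
          rw [Nat.add_sub_add_right, mul_comm]
      _ ≤ Epart l (m - a + 1) * a := epart_mul_succ_le hlt
      _ = a * Epart l (m + 1 - a) := by rw [mul_comm, show m - a + 1 = m + 1 - a by omega]
      _ ≤ Epart (l + 1) (m + 1) := ih (by omega)

theorem prod_le_epart {ι : Type*} (s : Finset ι) (f : ι → ℕ) {m : ℕ}
    (h : ∑ i ∈ s, f i ≤ m) : ∏ i ∈ s, f i ≤ Epart s.card m := by
  classical
  induction s using Finset.induction_on_max_value f generalizing m with
  | empty => simp [epart_zero_left]
  | insert j s hj hmax ih =>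
    rw [sum_insert hj] at h
    rw [prod_insert hj, card_insert_of_notMem hj]
    have hs : ∑ i ∈ s, f i ≤ #s * f j := by simpa using sum_le_card_nsmul s f (f j) hmax
    obtain ⟨a, rfl⟩ : ∃ a, m = ∑ i ∈ s, f i + a := ⟨m - ∑ i ∈ s, f i, by omega⟩
    have hfj : f j ≤ a := by omega
    calc f j * ∏ i ∈ s, f i ≤ a * Epart #s (∑ i ∈ s, f i + a - a) :=
          Nat.mul_le_mul hfj (ih (by omega))
      _ ≤ Epart (#s + 1) (∑ i ∈ s, f i + a) :=
          mul_epart_sub_le_epart_succ (by nlinarith [Nat.mul_le_mul_left #s hfj]) (by omega)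

theorem exists_sum_le_prod_eq_epart (l m : ℕ) :
    ∃ f : Fin l → ℕ, ∑ i, f i ≤ m ∧ ∏ i, f i = Epart l m := by
  rcases Nat.eq_zero_or_pos l with rfl | hl
  · exact ⟨Fin.elim0, by simp, by simp [epart_zero_left]⟩
  have hr : m % l < l := Nat.mod_lt m hl
  have hcard : #{i : Fin l | m % l ≤ (i : ℕ)} = l - m % l := by
    have := card_filter_add_card_filter_not (s := univ) (fun i : Fin l => (i : ℕ) < m % l)
    simp only [Fin.card_filter_val_lt, not_lt, card_univ, Fintype.card_fin] at this
    omega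
  refine ⟨fun i => if (i : ℕ) < m % l then m / l + 1 else m / l, ?_, ?_⟩
  · simp only [sum_ite, sum_const, smul_eq_mul, Fin.card_filter_val_lt, not_lt, hcard,
      min_eq_right hr.le]
    have : (l - m % l) * (m / l) + m % l * (m / l) = l * (m / l) := by
      rw [← add_mul, Nat.sub_add_cancel hr.le]
    linarith [Nat.div_add_mod m l]
  · simp only [prod_ite, prod_const, Fin.card_filter_val_lt, not_lt, hcard, min_eq_right hr.le,
      Epart]

theorem epart_mul_epart_le (l l' m m' : ℕ) :
    Epart l m * Epart l' m' ≤ Epart (l + l') (m + m') := by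
  obtain ⟨f, hf, hf'⟩ := exists_sum_le_prod_eq_epart l m
  obtain ⟨g, hg, hg'⟩ := exists_sum_le_prod_eq_epart l' m'
  have := prod_le_epart univ (Fin.append f g) (m := m + m') (by
    simpa [Fin.sum_univ_add] using add_le_add hf hg)
  simpa [Fin.prod_univ_add, hf', hg'] using this

theorem epart_mono (l : ℕ) : Monotone (Epart l) := fun m₁ m₂ h => by
  obtain ⟨f, hf, hf'⟩ := exists_sum_le_prod_eq_epart l m₁
  simpa [hf'] using prod_le_epart univ f (hf.trans h)

theorem exp_le_one_add_sq {x : ℝ} (hx0 : 0 ≤ x) (hx1 : x ≤ 1) : exp x ≤ (1 + x) ^ 2 := by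
  have h := abs_le.1 (abs_exp_sub_one_sub_id_le (abs_le.2 ⟨by linarith, hx1⟩))
  nlinarith [h.2]

theorem succ_pow_mul_sq_le {n t Q : ℕ} (hQ : 0 < Q) (h : n * Q ≤ t) :
    (t + 1) ^ n * Q ^ 2 ≤ t ^ n * (Q + 1) ^ 2 := by
  rcases Nat.eq_zero_or_pos n with rfl | hn
  · simpa using Nat.pow_le_pow_left (Nat.le_succ Q) 2
  have ht : 0 < t := by nlinarith
  have hQt : (n : ℝ) / t ≤ 1 / Q := by
    rw [div_le_div_iff₀ (by positivity) (by positivity)]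
    exact_mod_cast (by linarith : n * Q ≤ 1 * t)
  have key : (((t : ℝ) + 1) / t) ^ n ≤ (((Q : ℝ) + 1) / Q) ^ 2 := calc
    (((t : ℝ) + 1) / t) ^ n = (1 + 1 / t) ^ n := by rw [add_div, div_self (by positivity)]
    _ ≤ exp (1 / t) ^ n := by gcongr; linarith [add_one_le_exp (1 / (t : ℝ))]
    _ = exp (n / t) := by rw [← exp_nat_mul]; ring_nf
    _ ≤ exp (1 / Q) := exp_le_exp.2 hQt
    _ ≤ (1 + 1 / Q) ^ 2 :=
        exp_le_one_add_sq (by positivity) (div_le_one_of_le₀ (by exact_mod_cast hQ) (by positivity))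
    _ = (((Q : ℝ) + 1) / Q) ^ 2 := by rw [add_div _ _ (Q : ℝ), div_self (by positivity)]
  rw [div_pow, div_pow, div_le_div_iff₀ (by positivity) (by positivity), mul_comm _ ((t : ℝ) ^ n)]
    at key
  exact_mod_cast key

theorem epart_sq_mul_succ_pow_le {l t : ℕ} (hl : 0 < l) (ht : l ≤ t) :
    Epart l t ^ 2 * (t + 1) ^ l ≤ Epart l (t + 1) ^ 2 * t ^ l := by
  have hQ : 0 < t / l := Nat.div_pos ht hl
  refine Nat.le_of_mul_le_mul_right (c := (t / l) ^ 2) ?_ (by positivity)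
  calc Epart l t ^ 2 * (t + 1) ^ l * (t / l) ^ 2
      ≤ Epart l t ^ 2 * (t ^ l * (t / l + 1) ^ 2) := by
        rw [mul_assoc]; exact Nat.mul_le_mul_left _ (succ_pow_mul_sq_le hQ (Nat.mul_div_le t l))
    _ = (Epart l t * (t / l + 1)) ^ 2 * t ^ l := by ring
    _ = Epart l (t + 1) ^ 2 * t ^ l * (t / l) ^ 2 := by rw [← epart_succ_mul_div hl]; ring

theorem epart_sq_mul_pow_le {l a c : ℕ} (hl : 0 < l) (ha : l ≤ a) (hac : a ≤ c) :
    Epart l a ^ 2 * c ^ l ≤ Epart l c ^ 2 * a ^ l := by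
  induction c, hac using Nat.le_induction with
  | base => exact le_rfl
  | succ c hac ih =>
    refine Nat.le_of_mul_le_mul_right (c := c ^ l) ?_ (pow_pos (by omega) l)
    calc Epart l a ^ 2 * (c + 1) ^ l * c ^ l = Epart l a ^ 2 * c ^ l * (c + 1) ^ l := by ring
      _ ≤ Epart l c ^ 2 * a ^ l * (c + 1) ^ l := Nat.mul_le_mul_right _ ih
      _ = Epart l c ^ 2 * (c + 1) ^ l * a ^ l := by ring
      _ ≤ Epart l (c + 1) ^ 2 * c ^ l * a ^ l :=
          Nat.mul_le_mul_right _ (epart_sq_mul_succ_pow_le hl (ha.trans hac))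
      _ = Epart l (c + 1) ^ 2 * a ^ l * c ^ l := by ring

theorem epart_le_exp_mul_epart_of_le {l a b : ℕ} {s : ℝ} (hl : 0 < l) (hab : a ≤ b)
    (h : (a : ℝ) ≤ exp s * b) : (Epart l a : ℝ) ≤ exp (l * s / 2) * Epart l b := by
  rcases lt_or_ge a l with hal | hal
  · rw [epart_eq_zero_of_lt hal, Nat.cast_zero]; positivity
  have hb : (0 : ℝ) < (b : ℝ) ^ l := pow_pos (by exact_mod_cast (by omega : 0 < b)) l
  have hsq : (Epart l a : ℝ) ^ 2 * (b : ℝ) ^ l ≤ (Epart l b : ℝ) ^ 2 * (a : ℝ) ^ l := by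
    exact_mod_cast epart_sq_mul_pow_le hl hal hab
  refine le_of_pow_le_pow_left₀ two_ne_zero (by positivity) (le_of_mul_le_mul_right ?_ hb)
  calc (Epart l a : ℝ) ^ 2 * (b : ℝ) ^ l ≤ (Epart l b : ℝ) ^ 2 * (exp s * b) ^ l := by
        refine hsq.trans ?_; gcongr
    _ = (exp (l * s / 2) * Epart l b) ^ 2 * (b : ℝ) ^ l := by
        rw [mul_pow, mul_pow, ← exp_nat_mul, ← exp_nat_mul]; ring_nf

theorem epart_add_mul_pow_le {l q b : ℕ} (hb : l * q ≤ b) (n : ℕ) :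
    Epart l (b + n) * q ^ n ≤ Epart l b * (q + 1) ^ n := by
  induction n with
  | zero => simp
  | succ n ih =>
    calc Epart l (b + (n + 1)) * q ^ (n + 1) = Epart l (b + n + 1) * q * q ^ n := by ring_nf
      _ ≤ Epart l (b + n) * (q + 1) * q ^ n :=
          Nat.mul_le_mul_right _ (epart_succ_mul_le (by omega))
      _ = Epart l (b + n) * q ^ n * (q + 1) := by ring
      _ ≤ Epart l b * (q + 1) ^ n * (q + 1) := Nat.mul_le_mul_right _ ih
      _ = Epart l b * (q + 1) ^ (n + 1) := by ring

theorem epart_add_mul_le_exp_mul_epart {l q b : ℕ} (hq : 0 < q) (hb : l * q ≤ b) (k : ℕ) :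
    (Epart l (b + k * q) : ℝ) ≤ exp k * Epart l b := by
  have hexp : ((q : ℝ) + 1) ^ (k * q) ≤ exp k * (q : ℝ) ^ (k * q) := calc
    ((q : ℝ) + 1) ^ (k * q) = ((1 + (q : ℝ)⁻¹) ^ q) ^ k * (q : ℝ) ^ (k * q) := by
        rw [← pow_mul, mul_comm q k, ← mul_pow, add_mul, inv_mul_cancel₀ (by positivity), one_mul,
          add_comm]
    _ ≤ exp 1 ^ k * (q : ℝ) ^ (k * q) := by gcongr; exact one_add_inv_pow_le_exp
    _ = exp k * (q : ℝ) ^ (k * q) := by rw [← exp_nat_mul, mul_one]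
  refine le_of_mul_le_mul_right ?_ (by positivity : (0 : ℝ) < (q : ℝ) ^ (k * q))
  calc (Epart l (b + k * q) : ℝ) * (q : ℝ) ^ (k * q) ≤ Epart l b * ((q : ℝ) + 1) ^ (k * q) := by
        exact_mod_cast epart_add_mul_pow_le hb (k * q)
    _ ≤ Epart l b * (exp k * (q : ℝ) ^ (k * q)) := by gcongr
    _ = exp k * Epart l b * (q : ℝ) ^ (k * q) := by ring

/-- What remains of `m` after removing `k` parts of size `⌊m/(l+k)⌋` from its balanced partition
into `l + k` parts. -/
def dropParts (l k m : ℕ) : ℕ := l * (m / (l + k)) + m % (l + k)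

theorem dropParts_add_mul (l k m : ℕ) : dropParts l k m + k * (m / (l + k)) = m := by
  have := Nat.div_add_mod m (l + k)
  rw [dropParts]
  linarith

theorem mul_le_mul_dropParts (l k m : ℕ) : l * m ≤ (l + k) * dropParts l k m := by
  conv_lhs => rw [← Nat.div_add_mod m (l + k)]
  rw [dropParts]
  nlinarith [Nat.zero_le (k * (m % (l + k)))]

theorem epart_dropParts_le {l k m : ℕ} (hl : 0 < l + k) (hlm : l + k ≤ m) :
    (Epart l (dropParts l k m) : ℝ) ≤ exp k * (((l + k : ℕ) : ℝ) / m) ^ k * Epart (l + k) m := by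
  have hsplit := epart_mul_epart_le l k (dropParts l k m) (k * (m / (l + k)))
  rw [epart_mul, dropParts_add_mul] at hsplit
  set q := m / (l + k)
  have hq : 0 < q := Nat.div_pos hlm hl
  have hm : (m : ℝ) ≤ exp 1 * ((l + k : ℕ) * q) := by
    have h1 : m < (l + k) * (q + 1) := Nat.lt_mul_div_succ m hl
    have h2 : (m : ℝ) ≤ 2 * ((l + k : ℕ) * q) := by
      exact_mod_cast (by nlinarith : m ≤ 2 * ((l + k) * q))
    have h3 : (2 : ℝ) ≤ exp 1 := by linarith [add_one_le_exp (1 : ℝ)]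
    exact h2.trans (by gcongr)
  have hone : 1 ≤ exp 1 * (((l + k : ℕ) : ℝ) / m) * q := by
    rw [mul_div_assoc', div_mul_eq_mul_div, one_le_div (by exact_mod_cast hl.trans_le hlm)]
    linarith
  calc (Epart l (dropParts l k m) : ℝ)
      ≤ Epart l (dropParts l k m) * (exp 1 * (((l + k : ℕ) : ℝ) / m) * q) ^ k :=
        le_mul_of_one_le_right (by positivity) (one_le_pow₀ hone)
    _ = exp k * (((l + k : ℕ) : ℝ) / m) ^ k * (Epart l (dropParts l k m) * q ^ k : ℕ) := by
        push_cast; rw [mul_pow, mul_pow, ← exp_nat_mul, mul_one]; ring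
    _ ≤ exp k * (((l + k : ℕ) : ℝ) / m) ^ k * Epart (l + k) m := by gcongr

theorem cast_add_le_mul_exp_div {l : ℕ} (hl : 0 < l) (k : ℕ) :
    ((l + k : ℕ) : ℝ) ≤ l * exp (k / l) := by
  have := add_one_le_exp ((k : ℝ) / l)
  rw [div_add_one (by positivity), div_le_iff₀ (by positivity)] at this
  push_cast
  linarith

theorem epart_le_exp_mul_epart_dropParts {l k m m' : ℕ} {μ : ℝ} (hl : 0 < l) (hlm : l + k ≤ m)
    (hμ : 0 ≤ μ) (hm' : (m' : ℝ) ≤ (1 - μ) * m) :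
    (Epart l m' : ℝ) ≤ exp (2 * k - μ * (l + k) / 2) * Epart l (dropParts l k m) := by
  have hm : (0 : ℝ) < m := by exact_mod_cast (by omega : 0 < m)
  have hμ1 : μ ≤ 1 := by nlinarith [(m'.cast_nonneg : (0 : ℝ) ≤ m')]
  rcases le_or_gt m' (dropParts l k m) with hA | hB
  · have hmb : (m : ℝ) ≤ exp (k / l) * dropParts l k m := by
      have h1 : (l * m : ℝ) ≤ (l + k : ℕ) * dropParts l k m := by
        exact_mod_cast mul_le_mul_dropParts l k m
      refine le_of_mul_le_mul_left ?_ (by positivity : (0 : ℝ) < l)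
      nlinarith [cast_add_le_mul_exp_div hl k]
    have hm'b : (m' : ℝ) ≤ exp (k / l - μ) * dropParts l k m := by
      calc (m' : ℝ) ≤ exp (-μ) * m := hm'.trans (by gcongr; linarith [add_one_le_exp (-μ)])
        _ ≤ exp (-μ) * (exp (k / l) * dropParts l k m) := by gcongr
        _ = exp (k / l - μ) * dropParts l k m := by rw [← mul_assoc, ← exp_add]; ring_nf
    calc (Epart l m' : ℝ) ≤ exp (l * (k / l - μ) / 2) * Epart l (dropParts l k m) :=
          epart_le_exp_mul_epart_of_le hl hA hm'b
      _ ≤ exp (2 * k - μ * (l + k) / 2) * Epart l (dropParts l k m) := by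
          gcongr
          rw [mul_sub, mul_div_cancel₀ _ (by positivity)]
          nlinarith [(k.cast_nonneg : (0 : ℝ) ≤ k)]
  · have hq : 0 < m / (l + k) := Nat.div_pos hlm (by omega)
    have hμk : μ * (l + k) ≤ k := by
      have h1 : (dropParts l k m : ℝ) + 1 ≤ m' := by exact_mod_cast hB
      have h2 : (dropParts l k m : ℝ) + k * (m / (l + k) : ℕ) = m := by
        exact_mod_cast dropParts_add_mul l k m
      have h3 : ((l : ℝ) + k) * (m / (l + k) : ℕ) ≤ m := by
        exact_mod_cast Nat.mul_div_le m (l + k)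
      refine le_of_mul_le_mul_right ?_ (by positivity : (0 : ℝ) < (m / (l + k) : ℕ))
      nlinarith
    calc (Epart l m' : ℝ) ≤ Epart l (dropParts l k m + k * (m / (l + k))) := by
          rw [dropParts_add_mul]
          exact_mod_cast epart_mono l (by exact_mod_cast (by nlinarith : (m' : ℝ) ≤ m))
      _ ≤ exp k * Epart l (dropParts l k m) :=
          epart_add_mul_le_exp_mul_epart hq (Nat.le_add_right _ _) k
      _ ≤ exp (2 * k - μ * (l + k) / 2) * Epart l (dropParts l k m) := by gcongr; linarith

theorem epart_le_exp_mul_div_pow_mul_epart_of_le_one_sub_mul {l l' m m' : ℕ} {μ : ℝ}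
    (hl' : 0 < l') (hl'l : l' ≤ l) (hlm : l ≤ m) (hμ : 0 ≤ μ) (hm' : (m' : ℝ) ≤ (1 - μ) * m) :
    (Epart l' m' : ℝ) ≤
      exp (3 * ((l - l' : ℕ) : ℝ) - μ * l / 2) * ((l : ℝ) / m) ^ (l - l') * Epart l m := by
  obtain ⟨k, rfl⟩ : ∃ k, l = l' + k := ⟨l - l', by omega⟩
  rw [Nat.add_sub_cancel_left, show 3 * (k : ℝ) - μ * (l' + k : ℕ) / 2 =
    (2 * k - μ * (l' + k) / 2) + k by push_cast; ring, exp_add]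
  calc (Epart l' m' : ℝ) ≤ exp (2 * k - μ * (l' + k) / 2) * Epart l' (dropParts l' k m) :=
        epart_le_exp_mul_epart_dropParts hl' hlm hμ hm'
    _ ≤ exp (2 * k - μ * (l' + k) / 2) *
          (exp k * (((l' + k : ℕ) : ℝ) / m) ^ k * Epart (l' + k) m) := by
        gcongr
        exact epart_dropParts_le (by omega) hlm
    _ = _ := by ring

theorem statement12_general (l l' m m' : ℕ) (hl' : 1 ≤ l') :
    (∀ f : Fin l → ℕ, ∑ i, f i ≤ m → ∏ i, f i ≤ Epart l m) ∧
      Epart l m * Epart l' m' ≤ Epart (l + l') (m + m') ∧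
      ∀ μ : ℝ, 0 ≤ μ → l ≤ m → l' ≤ l → (m' : ℝ) ≤ (1 - μ) * (m : ℝ) →
        (Epart l' m' : ℝ) ≤
          Real.exp (3 * ((l - l' : ℕ) : ℝ) - μ * (l : ℝ) / 2) *
            ((l : ℝ) / (m : ℝ)) ^ (l - l') * (Epart l m : ℝ) :=
  ⟨fun f hf => by simpa using prod_le_epart univ f hf, epart_mul_epart_le l l' m m',
    fun _ hμ hlm hl'l hm' =>
      epart_le_exp_mul_div_pow_mul_epart_of_le_one_sub_mul hl' hl'l hlm hμ hm'⟩

/-- Basic properties of the function `E_ℓ(m)`. -/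
theorem statement12 (l l' m m' : ℕ) (hl : 1 ≤ l) (hl' : 1 ≤ l') :
    (∀ f : Fin l → ℕ, ∑ i, f i ≤ m → ∏ i, f i ≤ Epart l m) ∧
      Epart l m * Epart l' m' ≤ Epart (l + l') (m + m') ∧
      ∀ μ : ℝ, 0 ≤ μ → l ≤ m → l' ≤ l → (m' : ℝ) ≤ (1 - μ) * (m : ℝ) →
        (Epart l' m' : ℝ) ≤
          Real.exp (3 * ((l - l' : ℕ) : ℝ) - μ * (l : ℝ) / 2) *
            ((l : ℝ) / (m : ℝ)) ^ (l - l') * (Epart l m : ℝ) :=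
  statement12_general l l' m m' hl'
end

section
/- Let H be a graph on k vertices, let Γ be a graph, let U ⊆ V(Γ), let X ⊆ V(H) be a signature of H, and let f: X → V(Γ) be any function. Then the number of embeddings θ: H ↪ Γ satisfying θ(v) = f(v) for every v ∈ X and θ(v) ∈ U for every v ∈ V(H)∖X is at most E_{k−|X|}(|U|). -/
universe u v

open Filter

/-!
Every vertex `v ∉ X` must be sent into `U ∩ C_v`, where `C_v` consists of the vertices of `Γ`
whose adjacencies to `f(X)` copy those of `v` to `X`. As `X` is a signature, the sets `C_v` are
pairwise disjoint, so the count is at most a product of `ℓ = k - |X|` numbers with sum at most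
`|U|`. Such a product is at most `E_ℓ(|U|)`: peel off its smallest factor `t ≤ ⌊|U| / ℓ⌋` and
use that `t ↦ t * E_{ℓ-1}(m - t)` increases up to `t = ⌊m / ℓ⌋`, where it equals `E_ℓ(m)`.
-/

lemma epart_mul_add_of_le {ℓ q r : ℕ} (hr : r ≤ ℓ) :
    Epart ℓ (ℓ * q + r) = (q + 1) ^ r * q ^ (ℓ - r) := by
  rcases hr.lt_or_eq with hr | rfl
  · obtain ⟨hdiv, hmod⟩ := (Nat.div_mod_unique (by omega)).mpr ⟨add_comm r _, hr⟩
    rw [Epart, hdiv, hmod]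
  · rcases Nat.eq_zero_or_pos r with rfl | hr
    · simp [Epart]
    · have hqr : 0 + r * (q + 1) = r * q + r := by ring
      obtain ⟨hdiv, hmod⟩ := (Nat.div_mod_unique hr).mpr ⟨hqr, hr⟩
      simp [Epart, hdiv, hmod]

lemma div_mul_epart_succ {ℓ : ℕ} (hℓ : 0 < ℓ) (s : ℕ) :
    s / ℓ * Epart ℓ (s + 1) = (s / ℓ + 1) * Epart ℓ s := by
  have hr : s % ℓ + 1 ≤ ℓ := Nat.mod_lt s hℓ
  have hs : s + 1 = ℓ * (s / ℓ) + (s % ℓ + 1) := by rw [← add_assoc, Nat.div_add_mod]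
  rw [hs, epart_mul_add_of_le hr, Epart, show ℓ - s % ℓ = ℓ - (s % ℓ + 1) + 1 by omega]
  generalize ℓ - (s % ℓ + 1) = e
  ring

lemma mul_epart_succ_le {ℓ s t : ℕ} (ht : t * ℓ ≤ s) :
    t * Epart ℓ (s + 1) ≤ (t + 1) * Epart ℓ s := by
  rcases Nat.eq_zero_or_pos ℓ with rfl | hℓ
  · simp [Epart]
  rcases Nat.eq_zero_or_pos t with rfl | htpos
  · simp
  have htq : t ≤ s / ℓ := (Nat.le_div_iff_mul_le hℓ).mpr ht
  have hq : 0 < s / ℓ := htpos.trans_le htq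
  refine Nat.le_of_mul_le_mul_left ?_ hq
  calc s / ℓ * (t * Epart ℓ (s + 1)) = t * (s / ℓ + 1) * Epart ℓ s := by
        rw [mul_left_comm, div_mul_epart_succ hℓ, mul_assoc]
    _ ≤ s / ℓ * (t + 1) * Epart ℓ s := Nat.mul_le_mul_right _ (by nlinarith)
    _ = s / ℓ * ((t + 1) * Epart ℓ s) := by ring

lemma div_mul_epart_sub_div (ℓ m : ℕ) :
    m / (ℓ + 1) * Epart ℓ (m - m / (ℓ + 1)) = Epart (ℓ + 1) m := by
  have hr : m % (ℓ + 1) ≤ ℓ := Nat.le_of_lt_succ (Nat.mod_lt m ℓ.succ_pos)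
  have hm := Nat.div_add_mod m (ℓ + 1)
  have hsub : m - m / (ℓ + 1) = ℓ * (m / (ℓ + 1)) + m % (ℓ + 1) := by
    rw [add_mul] at hm; omega
  rw [hsub, epart_mul_add_of_le hr, Epart, show ℓ + 1 - m % (ℓ + 1) = ℓ - m % (ℓ + 1) + 1 by omega]
  ring

lemma mul_epart_sub_le {ℓ m t : ℕ} (ht : t ≤ m / (ℓ + 1)) :
    t * Epart ℓ (m - t) ≤ Epart (ℓ + 1) m := by
  have step : ∀ n < m / (ℓ + 1), n * Epart ℓ (m - n) ≤ (n + 1) * Epart ℓ (m - (n + 1)) := by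
    intro n hn
    have hm : (n + 1) * (ℓ + 1) ≤ m := (Nat.mul_le_mul_right _ hn).trans (Nat.div_mul_le_self m _)
    have hnm : n * ℓ + (n + 1) ≤ m := by nlinarith
    rw [show m - n = m - (n + 1) + 1 by omega]
    exact mul_epart_succ_le (by omega)
  rw [← div_mul_epart_sub_div]
  exact Nat.decreasingInduction (fun n hn ih => (step n hn).trans ih) le_rfl ht

lemma prod_le_epart_of_sum_le {ι : Type*} (s : Finset ι) (n : ι → ℕ) {m : ℕ}
    (hm : ∑ i ∈ s, n i ≤ m) : ∏ i ∈ s, n i ≤ Epart s.card m := by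
  classical
  induction s using Finset.induction_on_min_value n generalizing m with
  | empty => simp [Epart]
  | insert a s ha hmin ih =>
    rw [Finset.sum_insert ha] at hm
    rw [Finset.prod_insert ha, Finset.card_insert_of_notMem ha]
    have hsum : s.card * n a ≤ ∑ i ∈ s, n i := by
      simpa using Finset.card_nsmul_le_sum s n (n a) hmin
    have hdiv : n a ≤ m / (s.card + 1) := by
      rw [Nat.le_div_iff_mul_le s.card.succ_pos]; nlinarith
    calc n a * ∏ i ∈ s, n i ≤ n a * Epart s.card (m - n a) :=
          Nat.mul_le_mul_left _ (ih (by omega))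
      _ ≤ Epart (s.card + 1) m := mul_epart_sub_le hdiv

namespace SimpleGraph

variable {α β : Type*} (H : SimpleGraph α) (Γ : SimpleGraph β) (X : Set α) (f : α → β)

/-- The possible images of `v` under an embedding `H ↪g Γ` that agrees with `f` on `X`. -/
def candidates (v : α) : Set β := {u | ∀ x ∈ X, Γ.Adj u (f x) ↔ H.Adj v x}

variable {H Γ X f}

lemma Embedding.mem_candidates (θ : H ↪g Γ) (hθ : ∀ x ∈ X, θ x = f x) (v : α) :
    θ v ∈ candidates H Γ X f v := fun x hx => by
  rw [← hθ x hx]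
  exact θ.map_adj_iff

lemma disjoint_candidates_of_isSignature (hX : IsSignature H X) {v w : α} (hv : v ∉ X)
    (hw : w ∉ X) (hvw : v ≠ w) :
    Disjoint (candidates H Γ X f v) (candidates H Γ X f w) := by
  refine Set.disjoint_left.mpr fun u hu hu' => hX v hv w hw hvw ?_
  ext x
  simp only [Set.mem_inter_iff, mem_neighborSet]
  exact and_congr_left fun hx => (hu x hx).symm.trans (hu' x hx)

lemma card_embeddings_extending_le_prod [Finite β] [Fintype ↥Xᶜ] (U : Set β) :
    Nat.card {θ : H ↪g Γ // (∀ v ∈ X, θ v = f v) ∧ ∀ v ∉ X, θ v ∈ U} ≤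
      ∏ v : ↥Xᶜ, Nat.card ↥(U ∩ candidates H Γ X f v) := by
  rw [← Nat.card_pi]
  refine Nat.card_le_card_of_injective
    (fun θ v => ⟨θ.1 v, θ.2.2 v v.2, θ.1.mem_candidates θ.2.1 v⟩) fun θ θ' h => ?_
  ext a
  by_cases ha : a ∈ X
  · rw [θ.2.1 a ha, θ'.2.1 a ha]
  · exact congrArg Subtype.val (congrFun h ⟨a, ha⟩)

lemma sum_card_candidates_le_of_isSignature [Finite β] [Fintype ↥Xᶜ] (hX : IsSignature H X)
    (U : Set β) : ∑ v : ↥Xᶜ, Nat.card ↥(U ∩ candidates H Γ X f v) ≤ Nat.card U := by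
  have hdisj : Pairwise (Function.onFun Disjoint fun v : ↥Xᶜ => U ∩ candidates H Γ X f v) :=
    fun v w hvw => Disjoint.inter_left' _ <| Disjoint.inter_right' _ <|
      disjoint_candidates_of_isSignature hX v.2 w.2 (Subtype.coe_ne_coe.mpr hvw)
  simp only [Nat.card_coe_set_eq]
  rw [← finsum_eq_sum_of_fintype, ← Set.ncard_iUnion_of_finite (fun _ => Set.toFinite _) hdisj]
  exact Set.ncard_le_ncard (Set.iUnion_subset fun _ => Set.inter_subset_left)

end SimpleGraph

/-- If `X` is a signature of `H` (a graph on `k` vertices), `f : X → V(Γ)`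
is any function and `U ⊆ V(Γ)`, then the number of embeddings `θ : H ↪ Γ` with `θ = f`
on `X` and `θ(v) ∈ U` for `v ∉ X` is at most `E_{k - |X|}(|U|)`. -/
theorem statement13 {α β : Type} [Finite α] [Finite β] (H : SimpleGraph α)
    (Γ : SimpleGraph β) (k : ℕ) (hk : Nat.card α = k) (U : Set β) (X : Set α)
    (hX : IsSignature H X) (f : α → β) :
    Nat.card {θ : H ↪g Γ // (∀ v ∈ X, θ v = f v) ∧ ∀ v ∉ X, θ v ∈ U} ≤
      Epart (k - Nat.card X) (Nat.card U) := by
  have := Fintype.ofFinite ↥Xᶜ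
  have hcompl : (Finset.univ : Finset ↥Xᶜ).card = k - Nat.card X := by
    rw [Finset.card_univ, ← Nat.card_eq_fintype_card, Nat.card_coe_set_eq, Set.ncard_compl,
      hk, Nat.card_coe_set_eq]
  calc _ ≤ ∏ v : ↥Xᶜ, Nat.card ↥(U ∩ SimpleGraph.candidates H Γ X f v) :=
        SimpleGraph.card_embeddings_extending_le_prod U
    _ ≤ Epart (k - Nat.card X) (Nat.card U) := hcompl ▸ prod_le_epart_of_sum_le _ _
        (SimpleGraph.sum_card_candidates_le_of_isSignature hX U)
end

section
/- Let H be a graph on k vertices, let n ≥ 2, and let Γ be a graph on n vertices with emb(H,Γ) = emb(H,n). Then every vertex of Γ is contained in the image of at least (k/(n+k))·emb(H,n) embeddings H ↪ Γ. -/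
/-!
Let `A` be the set of embeddings `H ↪ Γ` avoiding `z`. Each of them hits `k` of the `n`
vertices, so some vertex `y` is hit by at least `k|A|/n` of them. Turning `z` into a
non-adjacent twin of `y` (the graph `Γ.comap (Function.update id z y)`) keeps every embedding
in `A` and adds, for each one through `y`, its copy rerouted through `z` instead. By maximality
of `Γ` the embeddings in `A` through `y` are therefore at most as many as the `d(z)`
embeddings through `z`, whence `k (emb(H, n) - d(z)) = k|A| ≤ n d(z)`.
-/

universe u v

open Filter

open Finset

namespace SimpleGraph

variable {α β γ : Type*} {H : SimpleGraph α} {Γ : SimpleGraph β}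

instance [Finite α] [Finite β] : Finite (H ↪g Γ) := DFunLike.finite _

def Embedding.toComap (θ : H ↪g Γ) (g : β ↪ γ) (r : γ → β) (hr : ∀ a, r (g (θ a)) = θ a) :
    H ↪g Γ.comap r where
  toEmbedding := θ.toEmbedding.trans g
  map_rel_iff' := by simp [hr]

end SimpleGraph

theorem Nat.card_subtype_add_card_subtype_not {X : Type*} [Finite X] (p : X → Prop) :
    Nat.card {x // p x} + Nat.card {x // ¬p x} = Nat.card X := by
  classical
  rw [← Nat.card_sum]
  exact Nat.card_congr (Equiv.sumCompl p)

theorem embCount_congr {α β γ : Type*} (H : SimpleGraph α) {Γ : SimpleGraph β}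
    {Γ' : SimpleGraph γ} (e : Γ ≃g Γ') : embCount H Γ = embCount H Γ' :=
  Nat.card_congr (RelIso.relEmbeddingCongr (RelIso.refl _) e)

theorem embCount_le_embMax {α β : Type*} [Finite α] [Finite β] (H : SimpleGraph α)
    (Γ : SimpleGraph β) : embCount H Γ ≤ embMax H (Nat.card β) := by
  let e := Finite.equivFin β
  refine le_csSup ⟨Nat.card (α → Fin (Nat.card β)), ?_⟩
    ⟨Γ.map e.toEmbedding, (embCount_congr H (SimpleGraph.Iso.map e Γ)).symm⟩
  rintro _ ⟨Γ', rfl⟩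
  exact Nat.card_le_card_of_injective _ DFunLike.coe_injective

theorem sum_card_hitting_eq {α β : Type*} [Finite α] [Fintype β] {H : SimpleGraph α}
    {Γ : SimpleGraph β} (P : (H ↪g Γ) → Prop) :
    ∑ y : β, Nat.card {θ : H ↪g Γ // P θ ∧ y ∈ Set.range θ} =
      Nat.card α * Nat.card {θ : H ↪g Γ // P θ} := by
  classical
  have : Fintype α := Fintype.ofFinite α
  have : Fintype (H ↪g Γ) := Fintype.ofFinite _
  have card_range (θ : H ↪g Γ) : #{y | y ∈ Set.range θ} = Fintype.card α := by
    rw [Set.filter_mem_univ_eq_toFinset, Set.toFinset_card, Set.card_range_of_injective θ.injective]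
  simp only [Nat.card_eq_fintype_card, Fintype.card_subtype, ← filter_filter]
  have := sum_card_bipartiteAbove_eq_sum_card_bipartiteBelow (s := (univ : Finset β))
    (t := {θ : H ↪g Γ | P θ}) (r := fun y (θ : H ↪g Γ) => y ∈ Set.range θ)
  simp only [bipartiteAbove, bipartiteBelow] at this
  rw [this, sum_congr rfl fun θ _ => card_range θ, sum_const, smul_eq_mul, mul_comm]

theorem card_avoiding_add_card_avoiding_hitting_le_embCount {α β : Type*} [Finite α] [Finite β]
    [DecidableEq β] {H : SimpleGraph α} {Γ : SimpleGraph β} (y z : β) :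
    Nat.card {θ : H ↪g Γ // z ∉ Set.range θ} +
      Nat.card {θ : H ↪g Γ // z ∉ Set.range θ ∧ y ∈ Set.range θ} ≤
      embCount H (Γ.comap (Function.update id z y)) := by
  set r := Function.update (id : β → β) z y
  have r_of_ne {x} (hx : x ≠ z) : r x = x := Function.update_of_ne hx _ _
  have r_swap {x} (hx : x ≠ z) : r (Equiv.swap y z x) = x := by
    rcases eq_or_ne x y with rfl | hxy
    · simp [r]
    · rw [Equiv.swap_apply_of_ne_of_ne hxy hx, r_of_ne hx]
  let keep (θ : {θ : H ↪g Γ // z ∉ Set.range θ}) : H ↪g Γ.comap r :=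
    θ.1.toComap (Function.Embedding.refl β) r fun a => r_of_ne fun h => θ.2 ⟨a, h⟩
  let move (θ : {θ : H ↪g Γ // z ∉ Set.range θ ∧ y ∈ Set.range θ}) : H ↪g Γ.comap r :=
    θ.1.toComap (Equiv.swap y z).toEmbedding r fun a => r_swap fun h => θ.2.1 ⟨a, h⟩
  have keep_inj : Function.Injective keep := fun θ θ' h =>
    Subtype.ext <| RelEmbedding.ext fun a => DFunLike.congr_fun h a
  have move_inj : Function.Injective move := fun θ θ' h =>
    Subtype.ext <| RelEmbedding.ext fun a => (Equiv.swap y z).injective (DFunLike.congr_fun h a)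
  have keep_ne_move θ θ' : keep θ ≠ move θ' := fun h => by
    obtain ⟨a, ha⟩ := θ'.2.2
    have hza : θ.1 a = Equiv.swap y z (θ'.1 a) := DFunLike.congr_fun h a
    rw [ha, Equiv.swap_apply_left] at hza
    exact θ.2 ⟨a, hza⟩
  rw [← Nat.card_sum]
  exact Nat.card_le_card_of_injective _ (keep_inj.sumElim move_inj keep_ne_move)

theorem card_avoiding_hitting_le_card_hitting {α β : Type*} [Finite α] [Finite β]
    {H : SimpleGraph α} {Γ : SimpleGraph β} (hmax : embCount H Γ = embMax H (Nat.card β))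
    (y z : β) :
    Nat.card {θ : H ↪g Γ // z ∉ Set.range θ ∧ y ∈ Set.range θ} ≤
      Nat.card {θ : H ↪g Γ // z ∈ Set.range θ} := by
  classical
  have split := Nat.card_subtype_add_card_subtype_not fun θ : H ↪g Γ => z ∈ Set.range θ
  have clone := card_avoiding_add_card_avoiding_hitting_le_embCount (H := H) (Γ := Γ) y z
  have bound := embCount_le_embMax H (Γ.comap (Function.update id z y))
  rw [embCount] at hmax
  omega

/-- If `Γ` is an `n`-vertex graph (`n ≥ 2`) attaining
`emb(H, Γ) = emb(H, n)` for a `k`-vertex graph `H`, then every vertex of `Γ` is in the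
image of at least `(k/(n+k)) emb(H, n)` embeddings `H ↪ Γ`. -/
theorem statement18 {α : Type} [Finite α] (H : SimpleGraph α) (k : ℕ)
    (hk : Nat.card α = k) (n : ℕ) (hn : 2 ≤ n) {β : Type} (Γ : SimpleGraph β)
    (hβ : Nat.card β = n) (hmax : embCount H Γ = embMax H n) (z : β) :
    (k : ℝ) / ((n : ℝ) + (k : ℝ)) * (embMax H n : ℝ) ≤
      (Nat.card {θ : H ↪g Γ // ∃ v : α, θ v = z} : ℝ) := by
  have : Finite β := Nat.finite_of_card_ne_zero (by omega)
  have : Fintype β := Fintype.ofFinite β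
  set hit := Nat.card {θ : H ↪g Γ // z ∈ Set.range θ}
  set avoid := Nat.card {θ : H ↪g Γ // z ∉ Set.range θ}
  have split : hit + avoid = embMax H n :=
    hmax ▸ Nat.card_subtype_add_card_subtype_not fun θ : H ↪g Γ => z ∈ Set.range θ
  obtain ⟨y, -, many_through_y⟩ : ∃ y ∈ univ, k * avoid ≤
      n * Nat.card {θ : H ↪g Γ // z ∉ Set.range θ ∧ y ∈ Set.range θ} := by
    refine exists_le_of_sum_le ⟨z, mem_univ z⟩ ?_
    rw [sum_const, card_univ, ← Nat.card_eq_fintype_card, ← mul_sum, sum_card_hitting_eq, hβ, hk,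
      smul_eq_mul]
  have through_y_le_hit := card_avoiding_hitting_le_card_hitting (hβ ▸ hmax) y z
  have key : k * embMax H n ≤ (n + k) * hit :=
    calc k * embMax H n = k * avoid + k * hit := by rw [← split]; ring
      _ ≤ n * hit + k * hit := Nat.add_le_add_right (many_through_y.trans (Nat.mul_le_mul_left n through_y_le_hit)) _
      _ = (n + k) * hit := by ring
  rw [div_mul_eq_mul_div, div_le_iff₀ (by positivity)]
  exact_mod_cast key.trans_eq (mul_comm _ _)
end
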